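/- arXiv:2005.12825 — 9 statements merged into one kernel-verified Lean document; each statement's English description precedes it below -/
import Mathlib

section
/- Let E be a finite-dimensional complex inner product space, ι a finite index type, L : ι → (E →ₗ[ℂ] E) a family of linear operators, M : E ≃ₗ[ℂ] E an invertible linear map, and C : ι → (E →ₗ[ℂ] E) a family of operators such that each C i is self-adjoint and positive definite (i.e. ⟪x, C i x⟫ > 0 for every x ≠ 0). Define H = ∑ i, (L i)† ∘ (L i), and, writing L̃ i = M ∘ (L i) ∘ M⁻¹, define H̃ = ∑ i, (L̃ i)† ∘ (C i) ∘ (L̃ i). Then the kernel of H̃ equals the image of the kernel of H under M, i.e. ker H̃ = Submodule.map M (ker H); in particular, finrank ℂ (ker H̃) = finrank ℂ (ker H), so the ground-state degeneracies of H and H̃ coincide. -/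
open scoped InnerProductSpace ComplexOrder

lemma key_kernel
    {E : Type*} [NormedAddCommGroup E] [InnerProductSpace ℂ E] [FiniteDimensional ℂ E]
    {ι : Type*} [Fintype ι] (A B : ι → (E →ₗ[ℂ] E))
    (hB : ∀ i, ∀ x : E, x ≠ 0 → 0 < ⟪x, (B i) x⟫_ℂ) (x : E) :
    (∑ i, (LinearMap.adjoint (A i)) ∘ₗ (B i) ∘ₗ (A i)) x = 0 ↔ ∀ i, A i x = 0 := by
  constructor
  · intro h i
    have hinner : (∑ i, ⟪A i x, (B i) (A i x)⟫_ℂ) = 0 := by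
      have := congrArg (fun y => ⟪x, y⟫_ℂ) h
      simp only [inner_zero_right] at this
      rw [← this, LinearMap.sum_apply, inner_sum]
      refine Finset.sum_congr rfl fun i _ => ?_
      simp [LinearMap.adjoint_inner_right]
    have hnn : ∀ i ∈ Finset.univ, 0 ≤ ⟪A i x, (B i) (A i x)⟫_ℂ := by
      intro i _
      by_cases hx : A i x = 0
      · simp [hx]
      · exact le_of_lt (hB i _ hx)
    have := (Finset.sum_eq_zero_iff_of_nonneg hnn).mp hinner i (Finset.mem_univ i)
    by_contra hx
    exact absurd this (ne_of_gt (hB i _ hx))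
  · intro h
    rw [LinearMap.sum_apply]
    refine Finset.sum_eq_zero fun i _ => ?_
    simp [h i]

/-- Witten's conjugation argument (Theorem 1): the kernel of the conjugated Hamiltonian
`H̃ = ∑ i, (L̃ i)† ∘ C i ∘ (L̃ i)` with `L̃ i = M ∘ L i ∘ M⁻¹` equals the image under `M` of the
kernel of `H = ∑ i, (L i)† ∘ (L i)`; in particular the ground-state degeneracies coincide. -/
theorem witten_conjugation
    {E : Type*} [NormedAddCommGroup E] [InnerProductSpace ℂ E] [FiniteDimensional ℂ E]
    {ι : Type*} [Fintype ι] (L : ι → (E →ₗ[ℂ] E)) (M : E ≃ₗ[ℂ] E) (C : ι → (E →ₗ[ℂ] E))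
    (hC_sa : ∀ i, IsSelfAdjoint (C i))
    (hC_pos : ∀ i, ∀ x : E, x ≠ 0 → 0 < ⟪x, (C i) x⟫_ℂ) :
    LinearMap.ker
        (∑ i, (LinearMap.adjoint ((M : E →ₗ[ℂ] E) ∘ₗ (L i) ∘ₗ (M.symm : E →ₗ[ℂ] E))) ∘ₗ
          (C i) ∘ₗ ((M : E →ₗ[ℂ] E) ∘ₗ (L i) ∘ₗ (M.symm : E →ₗ[ℂ] E)))
      = Submodule.map (M : E →ₗ[ℂ] E)
          (LinearMap.ker (∑ i, (LinearMap.adjoint (L i)) ∘ₗ (L i))) ∧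
    Module.finrank ℂ
        (LinearMap.ker
          (∑ i, (LinearMap.adjoint ((M : E →ₗ[ℂ] E) ∘ₗ (L i) ∘ₗ (M.symm : E →ₗ[ℂ] E))) ∘ₗ
            (C i) ∘ₗ ((M : E →ₗ[ℂ] E) ∘ₗ (L i) ∘ₗ (M.symm : E →ₗ[ℂ] E))))
      = Module.finrank ℂ (LinearMap.ker (∑ i, (LinearMap.adjoint (L i)) ∘ₗ (L i))) := by
  have hid : ∀ (i : ι), ∀ x : E, x ≠ 0 → 0 < ⟪x, (LinearMap.id (R := ℂ) (M := E)) x⟫_ℂ := by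
    intro _ x hx
    rw [LinearMap.id_apply, inner_self_eq_norm_sq_to_K]; norm_cast
    exact Complex.zero_lt_real.mpr (pow_pos (norm_pos_iff.mpr hx) 2)
  have hker : LinearMap.ker (∑ i, (LinearMap.adjoint (L i)) ∘ₗ (L i))
      = LinearMap.ker (∑ i, (LinearMap.adjoint (L i)) ∘ₗ (LinearMap.id) ∘ₗ (L i)) := by
    simp
  have h1 : LinearMap.ker
        (∑ i, (LinearMap.adjoint ((M : E →ₗ[ℂ] E) ∘ₗ (L i) ∘ₗ (M.symm : E →ₗ[ℂ] E))) ∘ₗ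
          (C i) ∘ₗ ((M : E →ₗ[ℂ] E) ∘ₗ (L i) ∘ₗ (M.symm : E →ₗ[ℂ] E)))
      = Submodule.map (M : E →ₗ[ℂ] E)
          (LinearMap.ker (∑ i, (LinearMap.adjoint (L i)) ∘ₗ (L i))) := by
    ext x
    rw [hker]
    rw [LinearMap.mem_ker, key_kernel _ _ hC_pos, Submodule.mem_map_equiv,
      LinearMap.mem_ker, key_kernel _ _ hid]
    constructor
    · intro h i
      have := h i
      simpa [M.map_eq_zero_iff] using this
    · intro h i
      simp [h i]
  exact ⟨h1, by rw [h1, LinearEquiv.finrank_map_eq]⟩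
end

section
/- Let E be a finite-dimensional complex inner product space, Q : E →ₗ[ℂ] E a linear operator with Q ∘ Q = 0, H = Q† ∘ Q + Q ∘ Q†, and M : E ≃ₗ[ℂ] E an invertible linear map. Define the conjugated supercharge Q̃ = M ∘ Q ∘ M⁻¹. If ψ ∈ E satisfies H ψ = 0, then Q̃ (M ψ) = 0, and moreover, if ψ ≠ 0, then M ψ is not in the range of Q̃ (there is no φ with M ψ = Q̃ φ). -/
/-- Witten's conjugation step: for a zero-energy ground state `ψ` of `H = Q†Q + QQ†` with
`Q² = 0`, the deformed state `Mψ` is annihilated by the conjugated supercharge `Q̃ = MQM⁻¹`,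
and if `ψ ≠ 0` then `Mψ` is not `Q̃`-exact. -/
theorem susy_conjugation
    {E : Type*} [NormedAddCommGroup E] [InnerProductSpace ℂ E] [FiniteDimensional ℂ E]
    (Q : E →ₗ[ℂ] E) (hQ : Q ∘ₗ Q = 0) (M : E ≃ₗ[ℂ] E) (ψ : E)
    (hψ : ((LinearMap.adjoint Q) ∘ₗ Q + Q ∘ₗ (LinearMap.adjoint Q)) ψ = 0) :
    ((M : E →ₗ[ℂ] E) ∘ₗ Q ∘ₗ (M.symm : E →ₗ[ℂ] E)) (M ψ) = 0 ∧
      (ψ ≠ 0 → ¬ ∃ φ : E, M ψ = ((M : E →ₗ[ℂ] E) ∘ₗ Q ∘ₗ (M.symm : E →ₗ[ℂ] E)) φ) := by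
  have hinner : inner (𝕜 := ℂ) ψ (((LinearMap.adjoint Q) ∘ₗ Q + Q ∘ₗ (LinearMap.adjoint Q)) ψ)
      = 0 := by rw [hψ, inner_zero_right]
  have hsplit : (‖Q ψ‖ : ℂ)^2 + (‖(LinearMap.adjoint Q) ψ‖ : ℂ)^2 = 0 := by
    have := hinner
    simp only [LinearMap.add_apply, LinearMap.comp_apply, inner_add_right] at this
    rw [← LinearMap.adjoint_inner_left Q ((LinearMap.adjoint Q) ψ) ψ,
      LinearMap.adjoint_inner_right Q ψ (Q ψ)] at this
    rwa [inner_self_eq_norm_sq_to_K, inner_self_eq_norm_sq_to_K] at this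
  have hQψ : Q ψ = 0 := by
    have h1 : (‖Q ψ‖ : ℝ)^2 + (‖(LinearMap.adjoint Q) ψ‖ : ℝ)^2 = 0 := by
      exact_mod_cast hsplit
    have := sq_nonneg ‖Q ψ‖
    have := sq_nonneg ‖(LinearMap.adjoint Q) ψ‖
    have hn : ‖Q ψ‖ = 0 := by nlinarith [sq_nonneg ‖Q ψ‖]
    simpa using hn
  have hQaψ : (LinearMap.adjoint Q) ψ = 0 := by
    have h1 : (‖Q ψ‖ : ℝ)^2 + (‖(LinearMap.adjoint Q) ψ‖ : ℝ)^2 = 0 := by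
      exact_mod_cast hsplit
    have hn : ‖(LinearMap.adjoint Q) ψ‖ = 0 := by nlinarith [sq_nonneg ‖(LinearMap.adjoint Q) ψ‖]
    simpa using hn
  constructor
  · simp [LinearMap.comp_apply, hQψ]
  · rintro hne ⟨φ, hφ⟩
    simp only [LinearMap.comp_apply, LinearEquiv.coe_coe] at hφ
    have hψeq : ψ = Q (M.symm φ) := by
      have := congrArg M.symm hφ
      simpa using this
    have : inner (𝕜 := ℂ) ψ ψ = 0 := by
      rw [hψeq]
      nth_rewrite 1 [← hψeq]
      rw [← LinearMap.adjoint_inner_left, hQaψ, inner_zero_left]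
    exact hne (inner_self_eq_zero.mp this)
end

section
/- Knabe's method: Let d, N, m be natural numbers with 3 ≤ m ≤ N, and let P 1, …, P (N−1) be complex d×d matrices such that each P j is a Hermitian projection (P jᴴ = P j and (P j) * (P j) = P j) and P j commutes with P k whenever |j − k| > 1. For 2 ≤ m' ≤ N and 1 ≤ j ≤ N − m' + 1 set h(j, m') = ∑_{k=j}^{j+m'−2} P k, and set H_N = ∑_{k=1}^{N−1} P k. Suppose δ : {2, …, m} → ℝ satisfies 0 ≤ δ m' ≤ 1 for all m', and for every 2 ≤ m' ≤ m and every 1 ≤ j ≤ N − m' + 1 the matrix (h(j, m'))² − (δ m') • h(j, m') is positive semidefinite. Let c = ((m−1)/(m−2)) • ((min over 2 ≤ m' ≤ m of δ m') − 1/(m−1)). Then (H_N)² − c • H_N is positive semidefinite; consequently, every nonzero eigenvalue λ of the Hermitian matrix H_N satisfies λ ≥ c. -/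
/-!
Knabe's argument. Cover the chain `1, …, N - 1` by windows of `m - 1` consecutive sites, letting
them slide off both ends of the chain so that they get shorter near the boundary. Then every site
lies in exactly `m - 1` windows, every pair of neighbouring sites in exactly `m - 2`, and every
other pair in at most `m - 2`. Expanding all squares into products `P k * P l`, the matrix
`(m - 2) H² + H - ∑ h_w²` becomes a nonnegative combination of products of commuting projections,
hence positive semidefinite; adding the local gap inequalities `h_w² - δ h_w ≥ 0` gives
`(m - 2) (H² - c H) ≥ 0`. At an eigenvector with eigenvalue `λ > 0` this reads `λ (λ - c) ≥ 0`.
-/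

open Matrix Finset
open scoped ComplexOrder

theorem Finset.sum_sum_eq_sum_card_filter_nsmul {ι κ M : Type*} [AddCommMonoid M] [DecidableEq κ]
    (E : Finset ι) (I : Finset κ) (W : ι → Finset κ) (hW : ∀ e ∈ E, W e ⊆ I) (f : κ → M) :
    ∑ e ∈ E, ∑ k ∈ W e, f k = ∑ k ∈ I, #{e ∈ E | k ∈ W e} • f k := by
  rw [sum_comm' (t' := I) (s' := fun k => {e ∈ E | k ∈ W e})]
  · simp only [sum_const]
  · intro e k
    simp only [mem_filter]
    exact ⟨fun ⟨he, hk⟩ => ⟨⟨he, hk⟩, hW e he hk⟩, fun ⟨h, _⟩ => h⟩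

theorem Finset.sum_sq_sum_eq_sum_sum_card_filter_nsmul {ι κ R : Type*} [Semiring R]
    [DecidableEq κ] (E : Finset ι) (I : Finset κ) (W : ι → Finset κ) (hW : ∀ e ∈ E, W e ⊆ I)
    (f : κ → R) :
    ∑ e ∈ E, (∑ k ∈ W e, f k) ^ 2
      = ∑ k ∈ I, ∑ l ∈ I, #{e ∈ E | k ∈ W e ∧ l ∈ W e} • (f k * f l) := by
  have h := sum_sum_eq_sum_card_filter_nsmul E (I ×ˢ I) (fun e => W e ×ˢ W e)
    (fun e he => product_subset_product (hW e he) (hW e he)) (fun kl => f kl.1 * f kl.2)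
  simp only [mem_product] at h
  simp only [sq, sum_mul_sum, ← sum_product', h]

namespace Matrix

variable {n 𝕜 : Type*} [Fintype n] [RCLike 𝕜]

open scoped MatrixOrder in
theorem PosSemidef.of_isStarProjection {p : Matrix n n 𝕜} (hp : IsStarProjection p) :
    p.PosSemidef :=
  hp.nonneg.posSemidef

variable [DecidableEq n]

theorem PosSemidef.sq_sub_smul_of_le {A : Matrix n n 𝕜} (hA : A.PosSemidef) {a b : ℝ}
    (hba : b ≤ a) (h : (A ^ 2 - a • A).PosSemidef) : (A ^ 2 - b • A).PosSemidef := by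
  have hsplit : A ^ 2 - b • A = (A ^ 2 - a • A) + (a - b) • A := by module
  rw [hsplit]
  exact h.add (hA.smul (sub_nonneg.2 hba))

theorem IsHermitian.le_eigenvalue_of_posSemidef_sq_sub_smul {A : Matrix n n 𝕜}
    (hA : A.IsHermitian) (hA₀ : A.PosSemidef) {c : ℝ} (h : (A ^ 2 - c • A).PosSemidef) {i : n}
    (hi : hA.eigenvalues i ≠ 0) : c ≤ hA.eigenvalues i := by
  set v : n → 𝕜 := ⇑(hA.eigenvectorBasis i)
  set μ := hA.eigenvalues i
  have hv : A *ᵥ v = μ • v := hA.mulVec_eigenvectorBasis i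
  have hvv : star v ⬝ᵥ v = 1 := by
    rw [dotProduct_comm, ← EuclideanSpace.inner_eq_star_dotProduct, inner_self_eq_norm_sq_to_K,
      hA.eigenvectorBasis.orthonormal.1 i]
    simp
  have hquad : star v ⬝ᵥ (A ^ 2 - c • A) *ᵥ v = ((μ * (μ - c) : ℝ) : 𝕜) := by
    rw [sub_mulVec, sq, ← mulVec_mulVec, hv, mulVec_smul, hv, smul_mulVec, hv, ← sub_smul,
      smul_smul, dotProduct_smul, hvv, RCLike.real_smul_eq_coe_mul, mul_one, mul_comm]
  have hnonneg : 0 ≤ μ * (μ - c) := by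
    have := h.dotProduct_mulVec_nonneg v
    rwa [hquad, RCLike.ofReal_nonneg] at this
  have hpos : 0 < μ := (hA₀.eigenvalues_nonneg i).lt_of_ne' hi
  linarith [(mul_nonneg_iff_of_pos_left hpos).1 hnonneg]

theorem posSemidef_nsmul_sq_add_sub_sum_sq_of_cover {ι κ : Type*} [DecidableEq κ]
    (E : Finset ι) (I : Finset κ) (W : ι → Finset κ) (hW : ∀ e ∈ E, W e ⊆ I)
    (P : κ → Matrix n n 𝕜) (hP : ∀ k ∈ I, IsStarProjection (P k)) (r : ℕ)
    (hcover : ∀ k ∈ I, #{e ∈ E | k ∈ W e} = r + 1)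
    (hpair : ∀ k ∈ I, ∀ l ∈ I, k ≠ l → #{e ∈ E | k ∈ W e ∧ l ∈ W e} ≤ r)
    (hcomm : ∀ k ∈ I, ∀ l ∈ I, #{e ∈ E | k ∈ W e ∧ l ∈ W e} < r → Commute (P k) (P l)) :
    (r • (∑ k ∈ I, P k) ^ 2 + ∑ k ∈ I, P k - ∑ e ∈ E, (∑ k ∈ W e, P k) ^ 2).PosSemidef := by
  set H := ∑ k ∈ I, P k
  set cnt : κ → κ → ℕ := fun k l => #{e ∈ E | k ∈ W e ∧ l ∈ W e}
  -- `D` is the matrix of the statement expanded in the products `P k * P l`; its coefficients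
  -- vanish unless `P k` and `P l` commute.
  set D := ∑ k ∈ I, ∑ l ∈ I, (r + (if k = l then 1 else 0) - cnt k l) • (P k * P l)
  have hD : D.PosSemidef := by
    refine posSemidef_sum _ fun k hk => posSemidef_sum _ fun l hl => ?_
    by_cases hkl : Commute (P k) (P l)
    · exact (PosSemidef.of_isStarProjection ((hP k hk).mul (hP l hl) hkl)).smul (Nat.zero_le _)
    · have hne : k ≠ l := by rintro rfl; exact hkl (Commute.refl _)
      have hcnt : cnt k l = r := le_antisymm (hpair k hk l hl hne)
        (not_lt.1 fun h => hkl (hcomm k hk l hl h))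
      simp [hne, hcnt, PosSemidef.zero]
  have hdiag : H = ∑ k ∈ I, ∑ l ∈ I, (if k = l then 1 else 0) • (P k * P l) := by
    refine sum_congr rfl fun k hk => ?_
    simp only [ite_smul, one_smul, zero_smul, sum_ite_eq, if_pos hk, (hP k hk).isIdempotentElem.eq]
  have hsq : D + ∑ e ∈ E, (∑ k ∈ W e, P k) ^ 2 = r • H ^ 2 + H := by
    rw [sum_sq_sum_eq_sum_sum_card_filter_nsmul E I W hW, sq, sum_mul_sum, smul_sum, hdiag,
      ← sum_add_distrib, ← sum_add_distrib]
    refine sum_congr rfl fun k hk => ?_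
    rw [← sum_add_distrib, smul_sum, ← sum_add_distrib]
    refine sum_congr rfl fun l hl => ?_
    have hle : cnt k l ≤ r + if k = l then 1 else 0 := by
      split_ifs with hkl
      · subst hkl; simpa [cnt] using (hcover k hk).le
      · exact hpair k hk l hl hkl
    rw [← add_smul, Nat.sub_add_cancel hle, add_smul]
  rwa [← hsq, add_sub_cancel_right]

theorem posSemidef_sq_sub_smul_of_cover {ι κ : Type*} [DecidableEq κ]
    (E : Finset ι) (I : Finset κ) (W : ι → Finset κ) (hW : ∀ e ∈ E, W e ⊆ I)
    (P : κ → Matrix n n 𝕜) (hP : ∀ k ∈ I, IsStarProjection (P k)) {r : ℕ} (hr : 0 < r)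
    (hcover : ∀ k ∈ I, #{e ∈ E | k ∈ W e} = r + 1)
    (hpair : ∀ k ∈ I, ∀ l ∈ I, k ≠ l → #{e ∈ E | k ∈ W e ∧ l ∈ W e} ≤ r)
    (hcomm : ∀ k ∈ I, ∀ l ∈ I, #{e ∈ E | k ∈ W e ∧ l ∈ W e} < r → Commute (P k) (P l))
    {γ c : ℝ} (hc : r * c = (r + 1) * γ - 1)
    (hgap : ∀ e ∈ E, ((∑ k ∈ W e, P k) ^ 2 - γ • ∑ k ∈ W e, P k).PosSemidef) :
    ((∑ k ∈ I, P k) ^ 2 - c • ∑ k ∈ I, P k).PosSemidef := by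
  set H := ∑ k ∈ I, P k
  have hlin : ∑ e ∈ E, ∑ k ∈ W e, P k = (r + 1) • H := by
    rw [sum_sum_eq_sum_card_filter_nsmul E I W hW, smul_sum]
    exact sum_congr rfl fun k hk => by rw [hcover k hk]
  have key : (r : ℝ) • (H ^ 2 - c • H)
      = (r • H ^ 2 + H - ∑ e ∈ E, (∑ k ∈ W e, P k) ^ 2)
        + ∑ e ∈ E, ((∑ k ∈ W e, P k) ^ 2 - γ • ∑ k ∈ W e, P k) := by
    rw [sum_sub_distrib, ← smul_sum]
    linear_combination (norm := module) γ • hlin - hc • H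
  have hsum := (posSemidef_nsmul_sq_add_sub_sum_sq_of_cover E I W hW P hP r hcover hpair
    hcomm).add (posSemidef_sum _ hgap)
  have hr' : (r : ℝ)⁻¹ * r = 1 := inv_mul_cancel₀ (by positivity)
  have hscaled := hsum.smul (inv_nonneg.2 (Nat.cast_nonneg r : (0 : ℝ) ≤ r))
  rwa [← key, smul_smul, hr', one_smul] at hscaled

end Matrix

/-- For `1 ≤ e ≤ N + m - 3` these are the full windows `[e + 2 - m, e]` together with the
boundary windows `[1, e]` and `[e + 2 - m, N - 1]` of every shorter length. -/
def chainWindow (N m e : ℕ) : Finset ℕ := Icc (max 1 (e + 2 - m)) (min e (N - 1))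

theorem mem_chainWindow {N m e k : ℕ} :
    k ∈ chainWindow N m e ↔ 1 ≤ k ∧ k ≤ N - 1 ∧ e + 2 ≤ k + m ∧ k ≤ e := by
  simp only [chainWindow, mem_Icc]
  omega

theorem chainWindow_subset (N m e : ℕ) : chainWindow N m e ⊆ Icc 1 (N - 1) := fun k hk => by
  rw [mem_chainWindow] at hk
  exact mem_Icc.2 ⟨hk.1, hk.2.1⟩

theorem card_chainWindows_containing {N m k l : ℕ} (hk : k ∈ Icc 1 (N - 1))
    (hl : l ∈ Icc 1 (N - 1)) :
    #{e ∈ Icc 1 (N + m - 3) | k ∈ chainWindow N m e ∧ l ∈ chainWindow N m e}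
      = min k l + m - 1 - max k l := by
  rw [mem_Icc] at hk hl
  have hfilter : {e ∈ Icc 1 (N + m - 3) | k ∈ chainWindow N m e ∧ l ∈ chainWindow N m e}
      = Icc (max k l) (min k l + m - 2) := by
    ext e
    simp only [mem_filter, mem_Icc, mem_chainWindow]
    omega
  rw [hfilter, Nat.card_Icc]
  omega

theorem exists_chainWindow_eq_Icc {N m e : ℕ} (hN : 2 ≤ N) (hm : 2 ≤ m)
    (he : e ∈ Icc 1 (N + m - 3)) :
    ∃ m' ∈ Icc 2 m, ∃ j ∈ Icc 1 (N - m' + 1), chainWindow N m e = Icc j (j + m' - 2) := by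
  rw [mem_Icc] at he
  refine ⟨min e (N - 1) + 2 - max 1 (e + 2 - m), ?_, max 1 (e + 2 - m), ?_, ?_⟩
  · rw [mem_Icc]; omega
  · rw [mem_Icc]; omega
  · rw [chainWindow]; congr 1; omega

/-- Knabe's method (Theorem 2): for a sum `H_N = ∑_{k=1}^{N-1} P k` of Hermitian projections
with `[P j, P k] = 0` for `|j - k| > 1`, if each sub-system Hamiltonian
`h j m' = ∑_{k=j}^{j+m'-2} P k` (for `2 ≤ m' ≤ m`) satisfies the gap inequality
`(h j m')² ≥ δ m' • h j m'` with `0 ≤ δ m' ≤ 1`, then `H_N² ≥ c • H_N` with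
`c = ((m-1)/(m-2)) ((min_{2 ≤ m' ≤ m} δ m') - 1/(m-1))`; consequently every nonzero eigenvalue
of `H_N` is at least `c`. -/
theorem knabe_method
    (d N m : ℕ) (hm : 3 ≤ m) (hmN : m ≤ N)
    (P : ℕ → Matrix (Fin d) (Fin d) ℂ)
    (hP_herm : ∀ j ∈ Finset.Icc 1 (N - 1), (P j)ᴴ = P j)
    (hP_proj : ∀ j ∈ Finset.Icc 1 (N - 1), P j * P j = P j)
    (hP_comm : ∀ j ∈ Finset.Icc 1 (N - 1), ∀ k ∈ Finset.Icc 1 (N - 1),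
      1 < (j : ℤ) - k ∨ 1 < (k : ℤ) - j → P j * P k = P k * P j)
    (δ : ℕ → ℝ)
    (hgap : ∀ m' ∈ Finset.Icc 2 m, ∀ j ∈ Finset.Icc 1 (N - m' + 1),
      ((∑ k ∈ Finset.Icc j (j + m' - 2), P k) ^ 2
        - δ m' • ∑ k ∈ Finset.Icc j (j + m' - 2), P k).PosSemidef)
    (c : ℝ)
    (hc : c = ((m - 1 : ℝ) / (m - 2))
      * ((Finset.Icc 2 m).inf' (Finset.nonempty_Icc.mpr (by omega)) δ - 1 / (m - 1))) :
    ((∑ k ∈ Finset.Icc 1 (N - 1), P k) ^ 2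
      - c • ∑ k ∈ Finset.Icc 1 (N - 1), P k).PosSemidef ∧
    ∀ (hH : (∑ k ∈ Finset.Icc 1 (N - 1), P k).IsHermitian) (i : Fin d),
      hH.eigenvalues i ≠ 0 → c ≤ hH.eigenvalues i := by
  have hP : ∀ k ∈ Icc 1 (N - 1), IsStarProjection (P k) := fun k hk =>
    ⟨hP_proj k hk, hP_herm k hk⟩
  set δ₀ := (Icc 2 m).inf' (nonempty_Icc.mpr (by omega)) δ
  have hc' : ((m - 2 : ℕ) : ℝ) * c = ((m - 2 : ℕ) + 1) * δ₀ - 1 := by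
    have hm3 : (3 : ℝ) ≤ m := by exact_mod_cast hm
    rw [hc, Nat.cast_sub (by omega)]
    field_simp [show (m : ℝ) - 2 ≠ 0 by linarith, show (m : ℝ) - 1 ≠ 0 by linarith]
    ring
  have hwindow_gap : ∀ e ∈ Icc 1 (N + m - 3),
      ((∑ k ∈ chainWindow N m e, P k) ^ 2 - δ₀ • ∑ k ∈ chainWindow N m e, P k).PosSemidef := by
    intro e he
    obtain ⟨m', hm', j, hj, hW⟩ := exists_chainWindow_eq_Icc (by omega) (by omega) he
    have hW_psd : (∑ k ∈ chainWindow N m e, P k).PosSemidef :=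
      posSemidef_sum _ fun k hk => .of_isStarProjection (hP k (chainWindow_subset N m e hk))
    rw [hW] at hW_psd ⊢
    exact hW_psd.sq_sub_smul_of_le (inf'_le δ hm') (hgap m' hm' j hj)
  have hcount : ∀ k ∈ Icc 1 (N - 1), ∀ l ∈ Icc 1 (N - 1),
      #{e ∈ Icc 1 (N + m - 3) | k ∈ chainWindow N m e ∧ l ∈ chainWindow N m e}
        = min k l + m - 1 - max k l :=
    fun k hk l hl => card_chainWindows_containing hk hl
  have hpsd : ((∑ k ∈ Icc 1 (N - 1), P k) ^ 2 - c • ∑ k ∈ Icc 1 (N - 1), P k).PosSemidef :=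
    posSemidef_sq_sub_smul_of_cover _ _ _ (fun e _ => chainWindow_subset N m e) P hP
      (r := m - 2) (by omega)
      (fun k hk => by simpa using (hcount k hk k hk).trans (by omega))
      (fun k hk l hl hkl => (hcount k hk l hl).trans_le (by omega))
      (fun k hk l hl hlt => hP_comm k hk l hl (by rw [hcount k hk l hl] at hlt; omega))
      hc' hwindow_gap
  refine ⟨hpsd, fun hH i hi => hH.le_eigenvalue_of_posSemidef_sq_sub_smul ?_ hpsd hi⟩
  exact posSemidef_sum _ fun k hk => .of_isStarProjection (hP k hk)
end

section
/- Let E be a finite-dimensional complex inner product space and let A, B : E →ₗ[ℂ] E be self-adjoint positive-semidefinite operators with ker A = ker B. Let c > 0 be a real number such that A − c • B is positive semidefinite, and let δ ≥ 0 be such that every nonzero eigenvalue of B is at least δ. Then every nonzero eigenvalue of A is at least c·δ. -/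
open scoped InnerProductSpace ComplexOrder

/-!
An eigenvector `x` of `A` for a nonzero eigenvalue `μ` lies in `range A ⊆ (ker A)ᗮ = (ker B)ᗮ`.
Expanding `x` in an orthonormal eigenbasis of `B`, only eigenvalues of `B` that are nonzero, hence
at least `δ`, contribute to `⟪x, B x⟫`, so `δ ‖x‖² ≤ re ⟪x, B x⟫`. Then
`μ ‖x‖² = ⟪x, A x⟫ ≥ c re ⟪x, B x⟫ ≥ c δ ‖x‖²`.
-/

theorem Module.End.HasEigenvector.re_inner_apply_self {𝕜 E : Type*} [RCLike 𝕜]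
    [NormedAddCommGroup E] [InnerProductSpace 𝕜 E] {T : E →ₗ[𝕜] E} {μ : 𝕜} {x : E}
    (hx : Module.End.HasEigenvector T μ x) : RCLike.re ⟪x, T x⟫_𝕜 = RCLike.re μ * ‖x‖ ^ 2 := by
  rw [hx.apply_eq_smul, inner_smul_right, inner_self_eq_norm_sq_to_K, ← RCLike.ofReal_pow,
    RCLike.re_mul_ofReal]

namespace LinearMap.IsSymmetric

variable {𝕜 E : Type*} [RCLike 𝕜] [NormedAddCommGroup E] [InnerProductSpace 𝕜 E]
  {T : E →ₗ[𝕜] E}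

theorem mem_orthogonal_ker_of_hasEigenvector (hT : T.IsSymmetric) {μ : 𝕜} {x : E}
    (hx : Module.End.HasEigenvector T μ x) (hμ : μ ≠ 0) : x ∈ (ker T)ᗮ := by
  intro y hy
  have : μ * ⟪y, x⟫_𝕜 = 0 := by
    rw [← inner_smul_right, ← hx.apply_eq_smul, ← hT, mem_ker.mp hy, inner_zero_left]
  exact (mul_eq_zero.mp this).resolve_left hμ

variable [FiniteDimensional 𝕜 E] {n : ℕ}

theorem inner_map_self_eq_sum_eigenvalues (hT : T.IsSymmetric) (hn : Module.finrank 𝕜 E = n)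
    (x : E) :
    ⟪x, T x⟫_𝕜 = ∑ i, ((hT.eigenvalues hn i * ‖⟪hT.eigenvectorBasis hn i, x⟫_𝕜‖ ^ 2 : ℝ) : 𝕜) := by
  rw [← (hT.eigenvectorBasis hn).sum_inner_mul_inner]
  refine Finset.sum_congr rfl fun i _ => ?_
  rw [← hT, apply_eigenvectorBasis, inner_smul_left, RCLike.conj_ofReal, ← inner_conj_symm x,
    mul_left_comm, RCLike.conj_mul]
  push_cast
  rfl

theorem mul_norm_sq_le_re_inner_map_self (hT : T.IsSymmetric) {δ : ℝ}
    (hgap : ∀ μ : ℝ, Module.End.HasEigenvalue T (μ : 𝕜) → μ ≠ 0 → δ ≤ μ)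
    {x : E} (hx : x ∈ (ker T)ᗮ) : δ * ‖x‖ ^ 2 ≤ RCLike.re ⟪x, T x⟫_𝕜 := by
  set b := hT.eigenvectorBasis rfl
  rw [hT.inner_map_self_eq_sum_eigenvalues rfl, map_sum, ← b.sum_sq_norm_inner_right,
    Finset.mul_sum]
  refine Finset.sum_le_sum fun i _ => ?_
  rw [RCLike.ofReal_re]
  by_cases hi : hT.eigenvalues rfl i = 0
  · have hbi : b i ∈ ker T := by simp [b, hi]
    rw [hi, zero_mul, Submodule.inner_right_of_mem_orthogonal hbi hx]
    simp
  · exact mul_le_mul_of_nonneg_right (hgap _ (hT.hasEigenvalue_eigenvalues rfl i) hi)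
      (by positivity)

end LinearMap.IsSymmetric

theorem gap_comparison_general
    {E : Type*} [NormedAddCommGroup E] [InnerProductSpace ℂ E] [FiniteDimensional ℂ E]
    (A B : E →ₗ[ℂ] E) (hA_sa : IsSelfAdjoint A) (hB_sa : IsSelfAdjoint B)
    (hker : LinearMap.ker A = LinearMap.ker B)
    (c : ℝ) (hc : 0 < c)
    (hdom : ∀ x : E, 0 ≤ (⟪x, (A - (c : ℂ) • B) x⟫_ℂ).re)
    (δ : ℝ)
    (hBgap : ∀ μ : ℂ, Module.End.HasEigenvalue B μ → μ ≠ 0 → (δ : ℂ) ≤ μ) :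
    ∀ μ : ℂ, Module.End.HasEigenvalue A μ → μ ≠ 0 → ((c * δ : ℝ) : ℂ) ≤ μ := by
  intro μ hμ hμ0
  have hA := (LinearMap.isSymmetric_iff_isSelfAdjoint A).mpr hA_sa
  have hB := (LinearMap.isSymmetric_iff_isSelfAdjoint B).mpr hB_sa
  obtain ⟨x, hx⟩ := hμ.exists_hasEigenvector
  have hxB : δ * ‖x‖ ^ 2 ≤ (⟪x, B x⟫_ℂ).re := by
    refine hB.mul_norm_sq_le_re_inner_map_self (fun r hr hr0 => ?_) ?_
    · exact Complex.real_le_real.mp (hBgap r hr (Complex.ofReal_ne_zero.mpr hr0))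
    · exact hker ▸ hA.mem_orthogonal_ker_of_hasEigenvector hx hμ0
  have hxA : c * (⟪x, B x⟫_ℂ).re ≤ μ.re * ‖x‖ ^ 2 := by
    have hdomx := hdom x
    rw [LinearMap.sub_apply, LinearMap.smul_apply, inner_sub_right, inner_smul_right,
      Complex.sub_re, Complex.re_ofReal_mul] at hdomx
    have hAx := hx.re_inner_apply_self
    simp only [RCLike.re_to_complex] at hAx
    linarith
  have hnorm : 0 < ‖x‖ ^ 2 := by have := hx.2; positivity
  have hre : c * δ ≤ μ.re := by
    refine le_of_mul_le_mul_right ?_ hnorm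
    calc c * δ * ‖x‖ ^ 2 = c * (δ * ‖x‖ ^ 2) := mul_assoc _ _ _
      _ ≤ c * (⟪x, B x⟫_ℂ).re := by gcongr
      _ ≤ μ.re * ‖x‖ ^ 2 := hxA
  have him : μ.im = 0 := Complex.conj_eq_iff_im.mp (hA.conj_eigenvalue_eq_self hμ)
  exact Complex.le_def.mpr ⟨by simpa using hre, by simp [him]⟩

/-- Min-max comparison (Corollary 1): if the self-adjoint positive-semidefinite operators `A`
and `B` have the same kernel, `A - c • B` is positive semidefinite for some `c > 0`, and every
nonzero eigenvalue of `B` is at least `δ ≥ 0`, then every nonzero eigenvalue of `A` is at least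
`c·δ`. -/
theorem gap_comparison
    {E : Type*} [NormedAddCommGroup E] [InnerProductSpace ℂ E] [FiniteDimensional ℂ E]
    (A B : E →ₗ[ℂ] E) (hA_sa : IsSelfAdjoint A) (hB_sa : IsSelfAdjoint B)
    (hA_pos : ∀ x : E, 0 ≤ (⟪x, A x⟫_ℂ).re)
    (hB_pos : ∀ x : E, 0 ≤ (⟪x, B x⟫_ℂ).re)
    (hker : LinearMap.ker A = LinearMap.ker B)
    (c : ℝ) (hc : 0 < c)
    (hdom : ∀ x : E, 0 ≤ (⟪x, (A - (c : ℂ) • B) x⟫_ℂ).re)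
    (δ : ℝ) (hδ : 0 ≤ δ)
    (hBgap : ∀ μ : ℂ, Module.End.HasEigenvalue B μ → μ ≠ 0 → (δ : ℂ) ≤ μ) :
    ∀ μ : ℂ, Module.End.HasEigenvalue A μ → μ ≠ 0 → ((c * δ : ℝ) : ℂ) ≤ μ :=
  gap_comparison_general A B hA_sa hB_sa hker c hc hdom δ hBgap
end

section
/- Peschel–Emery line of the ANNNI model: Let r > 0 be a real number. In Matrix (Fin 2) (Fin 2) ℂ let σx = !![0,1;1,0], σz = !![1,0;0,−1], and m = !![1,0;0,r]. Working with 4×4 matrices via the Kronecker product ⊗, set L = σx ⊗ 1 − 1 ⊗ σx, L̃ = (m ⊗ m) * L * (m ⊗ m)⁻¹, and C = (r²/2) • (m⁻² ⊗ m⁻²). Then L̃ᴴ * C * L̃ = −(σx ⊗ σx) + Jz • (σz ⊗ σz) + (B/2) • (σz ⊗ 1 + 1 ⊗ σz) + ε • 1, where Jz = (r − r⁻¹)²/4, B = (r² − r⁻²)/2, and ε = (r + r⁻¹)²/4. -/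
open Matrix
open scoped Kronecker Matrix

/-!
Conjugating by `m ⊗ m` conjugates each tensor factor, so `L'` is `A ⊗ 1 - 1 ⊗ A` with
`A = m σx m⁻¹ = !![0, r⁻¹; r, 0]`, and with `N = m⁻² = diag(1, r⁻²)` the left-hand side expands as
`(r²/2) (AᴴNA ⊗ N - AᴴN ⊗ NA - NA ⊗ AᴴN + N ⊗ AᴴNA)`. Since `AᴴNA = N` and `AᴴN = NA = r⁻¹ σx`,
this is `(rN) ⊗ (rN) - σx ⊗ σx`. Finally `rN = diag(r, r⁻¹) = a 1 + b σz` with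
`a = (r + r⁻¹)/2`, `b = (r - r⁻¹)/2`, and expanding the tensor square gives `ε = a²`, `B/2 = ab`,
`Jz = b²`.
-/

section Kronecker

variable {n R : Type*} [Fintype n] [DecidableEq n]

theorem conj_kronecker_one_sub_one_kronecker [CommRing R] {M : Matrix n n R}
    (hM : IsUnit M.det) (X : Matrix n n R) :
    (M ⊗ₖ M) * (X ⊗ₖ 1 - 1 ⊗ₖ X) * (M ⊗ₖ M)⁻¹ =
      (M * X * M⁻¹) ⊗ₖ 1 - 1 ⊗ₖ (M * X * M⁻¹) := by
  rw [inv_kronecker, mul_sub, sub_mul, ← mul_kronecker_mul, ← mul_kronecker_mul,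
    ← mul_kronecker_mul, ← mul_kronecker_mul, mul_one, mul_nonsing_inv M hM]

theorem sandwich_kronecker_one_sub_one_kronecker [CommRing R] [StarRing R]
    (A N : Matrix n n R) :
    (A ⊗ₖ 1 - 1 ⊗ₖ A)ᴴ * (N ⊗ₖ N) * (A ⊗ₖ 1 - 1 ⊗ₖ A) =
      (Aᴴ * N * A) ⊗ₖ N - (Aᴴ * N) ⊗ₖ (N * A) - (N * A) ⊗ₖ (Aᴴ * N) +
        N ⊗ₖ (Aᴴ * N * A) := by
  simp only [conjTranspose_sub, conjTranspose_kronecker, conjTranspose_one, sub_mul, mul_sub,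
    ← mul_kronecker_mul, mul_one, one_mul]
  abel

end Kronecker

section TwoByTwo

variable {K : Type*} [Field K] {x : K}

theorem inv_fin_two_diag_one (hx : x ≠ 0) : !![1, 0; 0, x]⁻¹ = !![1, 0; 0, x⁻¹] :=
  inv_eq_left_inv <| by simp [hx, one_fin_two]

theorem fin_two_diag_one_conj_pauliX (hx : x ≠ 0) :
    !![1, 0; 0, x] * !![0, 1; 1, 0] * !![1, 0; 0, x]⁻¹ = !![0, x⁻¹; x, 0] := by
  simp [inv_fin_two_diag_one hx]

theorem fin_two_diag_eq_smul_one_add_smul_pauliZ [NeZero (2 : K)] (a b : K) :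
    !![a, 0; 0, b] =
      ((a + b) / 2) • (1 : Matrix (Fin 2) (Fin 2) K) + ((a - b) / 2) • !![1, 0; 0, -1] := by
  rw [one_fin_two]
  ext i j
  fin_cases i <;> fin_cases j <;> simp <;> field_simp <;> ring

end TwoByTwo

/-- Peschel–Emery line of the ANNNI model: conjugating the classical Ising term
`L = σx ⊗ 1 - 1 ⊗ σx` by `m ⊗ m` with `m = diag(1, r)` and central term
`C = (r²/2) m⁻² ⊗ m⁻²` yields
`L̃ᴴ C L̃ = -σx⊗σx + Jz σz⊗σz + (B/2)(σz⊗1 + 1⊗σz) + ε`. -/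
theorem ANNNI_Peschel_Emery_line (r : ℝ) (hr : 0 < r) :
    let σx : Matrix (Fin 2) (Fin 2) ℂ := !![0, 1; 1, 0]
    let σz : Matrix (Fin 2) (Fin 2) ℂ := !![1, 0; 0, -1]
    let m : Matrix (Fin 2) (Fin 2) ℂ := !![1, 0; 0, (r : ℂ)]
    let L : Matrix (Fin 2 × Fin 2) (Fin 2 × Fin 2) ℂ := σx ⊗ₖ 1 - 1 ⊗ₖ σx
    let L' : Matrix (Fin 2 × Fin 2) (Fin 2 × Fin 2) ℂ := (m ⊗ₖ m) * L * (m ⊗ₖ m)⁻¹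
    let C : Matrix (Fin 2 × Fin 2) (Fin 2 × Fin 2) ℂ :=
      ((r ^ 2 / 2 : ℝ) : ℂ) • ((m⁻¹ ^ 2) ⊗ₖ (m⁻¹ ^ 2))
    let Jz : ℂ := ((r - r⁻¹) ^ 2 / 4 : ℝ)
    let B : ℂ := ((r ^ 2 - r⁻¹ ^ 2) / 2 : ℝ)
    let ε : ℂ := ((r + r⁻¹) ^ 2 / 4 : ℝ)
    L'ᴴ * C * L' = -(σx ⊗ₖ σx) + Jz • (σz ⊗ₖ σz) + (B / 2) • (σz ⊗ₖ 1 + 1 ⊗ₖ σz) + ε • 1 := by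
  intro σx σz m L L' C Jz B ε
  have hr0 : (r : ℂ) ≠ 0 := by exact_mod_cast hr.ne'
  set A : Matrix (Fin 2) (Fin 2) ℂ := !![0, (r : ℂ)⁻¹; r, 0]
  set N : Matrix (Fin 2) (Fin 2) ℂ := !![1, 0; 0, (r : ℂ)⁻¹ ^ 2]
  have hL' : L' = A ⊗ₖ 1 - 1 ⊗ₖ A := by
    have hm : IsUnit m.det := by simpa [m, det_fin_two_of] using hr0
    have hconj : m * σx * m⁻¹ = A := fin_two_diag_one_conj_pauliX hr0
    rw [← hconj]
    exact conj_kronecker_one_sub_one_kronecker hm σx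
  have hC : C = ((r : ℂ) ^ 2 / 2) • (N ⊗ₖ N) := by
    simp only [C]
    push_cast
    simp [N, m, inv_fin_two_diag_one hr0, sq]
  have hAH : Aᴴ = !![0, (r : ℂ); (r : ℂ)⁻¹, 0] := by
    ext i j
    fin_cases i <;> fin_cases j <;> simp [A]
  have hNA : N * A = (r : ℂ)⁻¹ • σx := by simp [N, A, σx, hr0, sq]
  have hAN : Aᴴ * N = (r : ℂ)⁻¹ • σx := by simp [hAH, N, σx, hr0, sq]
  have hANA : Aᴴ * N * A = N := by simp [hAH, N, A, hr0, sq]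
  have hN : N = (r : ℂ)⁻¹ •
      ((((r : ℂ) + (r : ℂ)⁻¹) / 2) • 1 + (((r : ℂ) - (r : ℂ)⁻¹) / 2) • σz) := by
    rw [← fin_two_diag_eq_smul_one_add_smul_pauliZ]
    simp [N, sq, hr0]
  rw [hL', hC, Matrix.mul_smul, Matrix.smul_mul, sandwich_kronecker_one_sub_one_kronecker,
    hANA, hAN, hNA, hN]
  simp only [add_kronecker, kronecker_add, smul_kronecker, kronecker_smul, one_kronecker_one, Jz,
    B, ε]
  push_cast
  match_scalars <;> field_simp <;> ring
end

section
/- Ground states of the q-deformed XXZ chain: Let N ≥ 1 and let q > 0 be real with q ≠ 1. Work in the vector space V = (Fin N → Bool) → ℂ, where s : Fin N → Bool encodes a spin configuration (s j = false meaning spin up, s j = true meaning spin down), and write z(s, k) = 1 if s k = false and z(s, k) = −1 if s k = true. Define the linear operators on V: the lowering operator σ⁻_j by (σ⁻_j ψ)(s) = ψ(Function.update s j false) if s j = true and 0 otherwise; the q-deformed total lowering operator S_q⁻ by (S_q⁻ ψ)(s) = ∑_{j : s j = true} ( ∏_{k < j} q^{z(s,k)/2} ) ( ∏_{k > j} q^{−z(s,k)/2}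 ) ψ(Function.update s j false); and S̃₁⁻ = ∑_{j} q^{(j+1)} • σ⁻_j (i.e. the site at position j ∈ Fin N carries weight q to the power of its 1-based label). Let Ω ∈ V be the all-up state, Ω(s) = 1 if s is constantly false and Ω(s) = 0 otherwise. Then for every natural number i with 0 ≤ i ≤ N there exists a nonzero complex number c such that (S_q⁻)^i Ω = c • (S̃₁⁻)^i Ω. -/
/-- The lowering operator `σ⁻_j` on the spin-1/2 chain of length `N`:
`(σ⁻_j ψ)(s) = ψ(s with site j flipped up)` if site `j` of `s` is down, and `0` otherwise. -/
noncomputable def sigmaMinus (N : ℕ) (j : Fin N) (ψ : (Fin N → Bool) → ℂ) :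
    (Fin N → Bool) → ℂ :=
  fun s => if s j = true then ψ (Function.update s j false) else 0

/-- The q-deformed total lowering operator `S_q⁻ = ∑_j q^{σz₁/2}···q^{σz_{j-1}/2} σ⁻_j
q^{-σz_{j+1}/2}···q^{-σz_N/2}` of `U_q(sl₂)`, where spin up (`false`) carries `σz`-eigenvalue
`+1` and spin down (`true`) carries `-1`. -/
noncomputable def SqMinus (N : ℕ) (q : ℝ) (ψ : (Fin N → Bool) → ℂ) :
    (Fin N → Bool) → ℂ :=
  fun s => ∑ j ∈ Finset.univ.filter (fun j : Fin N => s j = true),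
    (∏ k ∈ Finset.univ.filter (fun k : Fin N => k < j),
        (if s k = false then ((Real.sqrt q : ℝ) : ℂ) else (((Real.sqrt q)⁻¹ : ℝ) : ℂ))) *
    (∏ k ∈ Finset.univ.filter (fun k : Fin N => j < k),
        (if s k = false then (((Real.sqrt q)⁻¹ : ℝ) : ℂ) else ((Real.sqrt q : ℝ) : ℂ))) *
    ψ (Function.update s j false)

/-- The conjugated total lowering operator `S̃₁⁻ = M(q) S₁⁻ M(q)⁻¹ = ∑_j q^j σ⁻_j`, where the
site at position `j : Fin N` carries its 1-based label `j+1`. -/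
noncomputable def StildeMinus (N : ℕ) (q : ℝ) (ψ : (Fin N → Bool) → ℂ) :
    (Fin N → Bool) → ℂ :=
  ∑ j : Fin N, ((q : ℂ) ^ ((j : ℕ) + 1)) • sigmaMinus N j ψ

/-- The all-up state `|⇑⟩`. -/
noncomputable def allUp (N : ℕ) : (Fin N → Bool) → ℂ :=
  fun s => if s = (fun _ => false) then 1 else 0

/-! ### Auxiliary machinery -/

/-- The down-set of a configuration. -/
noncomputable def dsetX (N : ℕ) (s : Fin N → Bool) : Finset (Fin N) :=
  Finset.univ.filter (fun j => s j = true)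

/-- The model function: nonzero only on configurations with exactly `i` down spins, where it
equals `∏_{j ∈ D} q^{j+1}`. -/
noncomputable def PfunX (N : ℕ) (q : ℝ) (i : ℕ) (s : Fin N → Bool) : ℂ :=
  if (dsetX N s).card = i then ∏ j ∈ dsetX N s, (q : ℂ) ^ ((j : ℕ) + 1) else 0

lemma dsetX_update {N : ℕ} {s : Fin N → Bool} {j : Fin N} (hj : s j = true) :
    dsetX N (Function.update s j false) = (dsetX N s).erase j := by
  ext k
  rcases eq_or_ne k j with rfl | hk
  · simp [dsetX]
  · simp [dsetX, Function.update_of_ne hk, hk]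

lemma sum_rankX {α : Type*} [LinearOrder α] (D : Finset α) (F : ℕ → ℂ) :
    ∑ j ∈ D, F ((D.filter (fun k => k < j)).card) = ∑ m ∈ Finset.range D.card, F m := by
  classical
  set f : α → ℕ := fun j => (D.filter (fun k => k < j)).card with hf
  have hmono : ∀ x ∈ D, ∀ y ∈ D, x < y → f x < f y := by
    intro x hx y hy hxy
    apply Finset.card_lt_card
    have hsub : D.filter (fun k => k < x) ⊆ D.filter (fun k => k < y) := by
      intro k hk; rw [Finset.mem_filter] at hk ⊢; exact ⟨hk.1, hk.2.trans hxy⟩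
    rw [Finset.ssubset_iff_of_subset hsub]
    exact ⟨x, Finset.mem_filter.2 ⟨hx, hxy⟩, by simp⟩
  have hinj : ∀ x ∈ D, ∀ y ∈ D, f x = f y → x = y := by
    intro x hx y hy hxy
    rcases lt_trichotomy x y with h | h | h
    · exact absurd hxy (hmono x hx y hy h).ne
    · exact h
    · exact absurd hxy.symm (hmono y hy x hx h).ne
  have himg : D.image f = Finset.range D.card := by
    apply Finset.eq_of_subset_of_card_le
    · intro m hm
      simp only [Finset.mem_image] at hm
      obtain ⟨j, hj, rfl⟩ := hm
      rw [Finset.mem_range]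
      have hsub : D.filter (fun k => k < j) ⊆ D.erase j := by
        intro k hk; rw [Finset.mem_filter] at hk
        exact Finset.mem_erase.2 ⟨ne_of_lt hk.2, hk.1⟩
      calc f j ≤ (D.erase j).card := Finset.card_le_card hsub
        _ < D.card := Finset.card_erase_lt_of_mem hj
    · rw [Finset.card_range, Finset.card_image_of_injOn (fun x hx y hy => hinj x hx y hy)]
  rw [← himg, Finset.sum_image hinj]

lemma AvalX {N : ℕ} {q : ℝ} (hq : 0 < q) (s : Fin N → Bool) (j : Fin N) :
    (∏ k ∈ Finset.univ.filter (fun k : Fin N => k < j),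
        (if s k = false then ((Real.sqrt q : ℝ) : ℂ) else (((Real.sqrt q)⁻¹ : ℝ) : ℂ))) *
    (∏ k ∈ Finset.univ.filter (fun k : Fin N => j < k),
        (if s k = false then (((Real.sqrt q)⁻¹ : ℝ) : ℂ) else ((Real.sqrt q : ℝ) : ℂ)))
    = ((Real.sqrt q : ℝ) : ℂ) ^ (2 * ((j : ℕ) : ℤ) + 1 - (N : ℤ)
        + 2 * (((((dsetX N s).filter (fun k => j < k)).card : ℤ))
            - ((((dsetX N s).filter (fun k => k < j)).card : ℤ)))) := by
  classical
  set r : ℂ := ((Real.sqrt q : ℝ) : ℂ) with hrdef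
  have hr : r ≠ 0 := by
    simp only [hrdef, ne_eq, Complex.ofReal_eq_zero]
    exact (Real.sqrt_pos.2 hq).ne'
  have hinv : (((Real.sqrt q)⁻¹ : ℝ) : ℂ) = r⁻¹ := by push_cast; rfl
  rw [hinv, Finset.prod_ite, Finset.prod_const, Finset.prod_const,
    Finset.prod_ite, Finset.prod_const, Finset.prod_const]
  have e₁ : ((Finset.univ.filter (fun k : Fin N => k < j)).filter (fun k => ¬ s k = false))
      = (dsetX N s).filter (fun k => k < j) := by
    ext k; simp [dsetX, and_comm]
  have e₂ : ((Finset.univ.filter (fun k : Fin N => j < k)).filter (fun k => ¬ s k = false))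
      = (dsetX N s).filter (fun k => j < k) := by
    ext k; simp [dsetX, and_comm]
  rw [e₁, e₂]
  have ht₁ : ((Finset.univ.filter (fun k : Fin N => k < j)).filter (fun k => s k = false)).card
      + ((dsetX N s).filter (fun k => k < j)).card = (j : ℕ) := by
    rw [← e₁]
    rw [Finset.card_filter_add_card_filter_not]
    have : Finset.univ.filter (fun k : Fin N => k < j) = Finset.Iio j := by ext k; simp
    rw [this, Fin.card_Iio]
  have ht₂ : ((Finset.univ.filter (fun k : Fin N => j < k)).filter (fun k => s k = false)).card
      + ((dsetX N s).filter (fun k => j < k)).card = N - 1 - (j : ℕ) := by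
    rw [← e₂]
    rw [Finset.card_filter_add_card_filter_not]
    have : Finset.univ.filter (fun k : Fin N => j < k) = Finset.Ioi j := by ext k; simp
    rw [this, Fin.card_Ioi]
  have hjN : (j : ℕ) < N := j.isLt
  set a₁ := ((Finset.univ.filter (fun k : Fin N => k < j)).filter (fun k => s k = false)).card
  set a₂ := ((Finset.univ.filter (fun k : Fin N => j < k)).filter (fun k => s k = false)).card
  set d₁ := ((dsetX N s).filter (fun k => k < j)).card
  set d₂ := ((dsetX N s).filter (fun k => j < k)).card
  rw [inv_pow, inv_pow, ← zpow_natCast r a₁, ← zpow_natCast r d₁, ← zpow_natCast r a₂,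
    ← zpow_natCast r d₂, ← zpow_neg, ← zpow_neg, ← zpow_add₀ hr, ← zpow_add₀ hr,
    ← zpow_add₀ hr]
  congr 1
  omega

lemma hq2X {q : ℝ} (hq : 0 < q) (t : ℤ) :
    ((Real.sqrt q : ℝ) : ℂ) ^ (2 * t) = (q : ℂ) ^ t := by
  rw [zpow_mul]
  congr 1
  rw [show (2 : ℤ) = ((2 : ℕ) : ℤ) from rfl, zpow_natCast]
  rw [← Complex.ofReal_pow, Real.sq_sqrt hq.le]

lemma hrX {q : ℝ} (hq : 0 < q) : ((Real.sqrt q : ℝ) : ℂ) ≠ 0 := by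
  simp only [ne_eq, Complex.ofReal_eq_zero]
  exact (Real.sqrt_pos.2 hq).ne'

lemma ddX {N : ℕ} {i : ℕ} {D : Finset (Fin N)} {j : Fin N} (hj : j ∈ D)
    (hD : D.card = i + 1) :
    (D.filter (fun k => k < j)).card + (D.filter (fun k => j < k)).card = i := by
  classical
  have e₁ : D.filter (fun k => k < j) = (D.erase j).filter (fun k => k < j) := by
    ext k; simp only [Finset.mem_filter, Finset.mem_erase]
    constructor
    · rintro ⟨hk, hlt⟩; exact ⟨⟨ne_of_lt hlt, hk⟩, hlt⟩
    · rintro ⟨⟨_, hk⟩, hlt⟩; exact ⟨hk, hlt⟩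
  have e₂ : D.filter (fun k => j < k) = (D.erase j).filter (fun k => ¬ k < j) := by
    ext k; simp only [Finset.mem_filter, Finset.mem_erase]
    constructor
    · rintro ⟨hk, hlt⟩; exact ⟨⟨ne_of_gt hlt, hk⟩, not_lt.2 hlt.le⟩
    · rintro ⟨⟨hne, hk⟩, hnlt⟩; exact ⟨hk, lt_of_le_of_ne (not_lt.1 hnlt) hne.symm⟩
  rw [e₁, e₂, Finset.card_filter_add_card_filter_not,
    Finset.card_erase_of_mem hj, hD]
  omega

lemma Sq_applyX {N : ℕ} {q : ℝ} (hq : 0 < q) (i : ℕ) (c : ℂ) (f : (Fin N → Bool) → ℂ)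
    (hf : ∀ s, f s = c * PfunX N q i s) (s : Fin N → Bool) :
    SqMinus N q f s =
      (c * ((Real.sqrt q : ℝ) : ℂ) ^ (-(N : ℤ) - 1)
        * ∑ m ∈ Finset.range (i + 1), (q : ℂ) ^ ((i : ℤ) - 2 * (m : ℤ)))
      * PfunX N q (i + 1) s := by
  classical
  have hfilt : Finset.univ.filter (fun j : Fin N => s j = true) = dsetX N s := rfl
  rw [SqMinus]
  rw [hfilt]
  by_cases hD : (dsetX N s).card = i + 1
  · calc
      ∑ j ∈ dsetX N s,
          (∏ k ∈ Finset.univ.filter (fun k : Fin N => k < j),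
              (if s k = false then ((Real.sqrt q : ℝ) : ℂ) else (((Real.sqrt q)⁻¹ : ℝ) : ℂ))) *
          (∏ k ∈ Finset.univ.filter (fun k : Fin N => j < k),
              (if s k = false then (((Real.sqrt q)⁻¹ : ℝ) : ℂ) else ((Real.sqrt q : ℝ) : ℂ))) *
          f (Function.update s j false)
        = ∑ j ∈ dsetX N s,
            (c * ((Real.sqrt q : ℝ) : ℂ) ^ (-(N : ℤ) - 1)
              * ∏ l ∈ dsetX N s, (q : ℂ) ^ ((l : ℕ) + 1))
            * ((q : ℂ) ^ ((i : ℤ) - 2 * ((((dsetX N s).filter (fun k => k < j)).card : ℕ) : ℤ))) := by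
        apply Finset.sum_congr rfl
        intro j hj
        have hsj : s j = true := by simpa [dsetX] using hj
        rw [AvalX hq s j, hf]
        simp only [PfunX, dsetX_update hsj]
        rw [Finset.card_erase_of_mem hj, hD, Nat.add_sub_cancel, if_pos rfl]
        have hdd := ddX hj hD
        have hexp : (2 * ((j : ℕ) : ℤ) + 1 - (N : ℤ)
            + 2 * (((((dsetX N s).filter (fun k => j < k)).card : ℤ))
                - ((((dsetX N s).filter (fun k => k < j)).card : ℤ))))
            = 2 * (((j : ℕ) : ℤ) + 1) + ((-(N : ℤ) - 1)
              + 2 * ((i : ℤ) - 2 * (((dsetX N s).filter (fun k => k < j)).card : ℤ))) := by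
          omega
        rw [hexp, zpow_add₀ (hrX hq), zpow_add₀ (hrX hq), hq2X hq, hq2X hq]
        have hjq : (q : ℂ) ^ (((j : ℕ) : ℤ) + 1) = (q : ℂ) ^ ((j : ℕ) + 1) := by
          rw [show ((j : ℕ) : ℤ) + 1 = (((j : ℕ) + 1 : ℕ) : ℤ) by push_cast; ring,
            zpow_natCast]
        rw [hjq, ← Finset.mul_prod_erase (dsetX N s) (fun l => (q : ℂ) ^ ((l : ℕ) + 1)) hj]
        ring
      _ = (c * ((Real.sqrt q : ℝ) : ℂ) ^ (-(N : ℤ) - 1)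
              * ∏ l ∈ dsetX N s, (q : ℂ) ^ ((l : ℕ) + 1))
            * ∑ j ∈ dsetX N s,
              ((q : ℂ) ^ ((i : ℤ) - 2 * ((((dsetX N s).filter (fun k => k < j)).card : ℕ) : ℤ))) := by
        rw [Finset.mul_sum]
      _ = (c * ((Real.sqrt q : ℝ) : ℂ) ^ (-(N : ℤ) - 1)
              * ∏ l ∈ dsetX N s, (q : ℂ) ^ ((l : ℕ) + 1))
            * ∑ m ∈ Finset.range (i + 1), (q : ℂ) ^ ((i : ℤ) - 2 * (m : ℤ)) := by
        rw [sum_rankX (dsetX N s) (fun m => (q : ℂ) ^ ((i : ℤ) - 2 * (m : ℤ))), hD]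
      _ = (c * ((Real.sqrt q : ℝ) : ℂ) ^ (-(N : ℤ) - 1)
            * ∑ m ∈ Finset.range (i + 1), (q : ℂ) ^ ((i : ℤ) - 2 * (m : ℤ)))
          * PfunX N q (i + 1) s := by
        rw [PfunX, if_pos hD]; ring
  · rw [Finset.sum_eq_zero, PfunX, if_neg hD, mul_zero]
    intro j hj
    have hsj : s j = true := by simpa [dsetX] using hj
    have hcard : (dsetX N (Function.update s j false)).card ≠ i := by
      rw [dsetX_update hsj, Finset.card_erase_of_mem hj]
      have hpos : 0 < (dsetX N s).card := Finset.card_pos.2 ⟨j, hj⟩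
      omega
    rw [hf, PfunX, if_neg hcard, mul_zero, mul_zero]

lemma St_applyX {N : ℕ} {q : ℝ} (i : ℕ) (f : (Fin N → Bool) → ℂ)
    (hf : ∀ s, f s = (Nat.factorial i : ℂ) * PfunX N q i s) (s : Fin N → Bool) :
    StildeMinus N q f s = (Nat.factorial (i + 1) : ℂ) * PfunX N q (i + 1) s := by
  classical
  have hstep : StildeMinus N q f s
      = ∑ j ∈ dsetX N s, (q : ℂ) ^ ((j : ℕ) + 1) * f (Function.update s j false) := by
    rw [StildeMinus, Finset.sum_apply]
    simp only [Pi.smul_apply, smul_eq_mul, sigmaMinus, mul_ite, mul_zero]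
    rw [← Finset.sum_filter]
    rfl
  rw [hstep]
  by_cases hD : (dsetX N s).card = i + 1
  · calc
      ∑ j ∈ dsetX N s, (q : ℂ) ^ ((j : ℕ) + 1) * f (Function.update s j false)
        = ∑ _j ∈ dsetX N s,
            ((Nat.factorial i : ℂ) * ∏ l ∈ dsetX N s, (q : ℂ) ^ ((l : ℕ) + 1)) := by
        apply Finset.sum_congr rfl
        intro j hj
        have hsj : s j = true := by simpa [dsetX] using hj
        rw [hf]
        simp only [PfunX, dsetX_update hsj]
        rw [Finset.card_erase_of_mem hj, hD, Nat.add_sub_cancel, if_pos rfl]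
        rw [← Finset.mul_prod_erase (dsetX N s) (fun l => (q : ℂ) ^ ((l : ℕ) + 1)) hj]
        ring
      _ = (Nat.factorial (i + 1) : ℂ) * PfunX N q (i + 1) s := by
        rw [Finset.sum_const, hD, PfunX, if_pos hD, nsmul_eq_mul, Nat.factorial_succ]
        push_cast
        ring
  · rw [Finset.sum_eq_zero, PfunX, if_neg hD, mul_zero]
    intro j hj
    have hsj : s j = true := by simpa [dsetX] using hj
    have hcard : (dsetX N (Function.update s j false)).card ≠ i := by
      rw [dsetX_update hsj, Finset.card_erase_of_mem hj]
      have hpos : 0 < (dsetX N s).card := Finset.card_pos.2 ⟨j, hj⟩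
      omega
    rw [hf, PfunX, if_neg hcard, mul_zero, mul_zero]

lemma baseX {N : ℕ} {q : ℝ} (s : Fin N → Bool) : allUp N s = PfunX N q 0 s := by
  classical
  rw [allUp, PfunX]
  by_cases h : s = fun _ => false
  · have hd : dsetX N s = ∅ := by
      subst h; simp [dsetX]
    rw [if_pos h, hd]
    simp
  · rw [if_neg h, if_neg]
    intro hc
    apply h
    funext j
    have : j ∉ dsetX N s := by
      rw [Finset.card_eq_zero] at hc
      simp [hc]
    simpa [dsetX] using this

lemma Sq_iterX {N : ℕ} {q : ℝ} (hq : 0 < q) (i : ℕ) :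
    ∃ c : ℂ, c ≠ 0 ∧ ∀ s, (SqMinus N q)^[i] (allUp N) s = c * PfunX N q i s := by
  induction i with
  | zero =>
    exact ⟨1, one_ne_zero, fun s => by simpa using baseX s⟩
  | succ i ih =>
    obtain ⟨c, hc, hP⟩ := ih
    have hSre : (∑ m ∈ Finset.range (i + 1), (q : ℂ) ^ ((i : ℤ) - 2 * (m : ℤ)))
        = (((∑ m ∈ Finset.range (i + 1), q ^ ((i : ℤ) - 2 * (m : ℤ))) : ℝ) : ℂ) := by
      push_cast
      rfl
    have hSne : (∑ m ∈ Finset.range (i + 1), (q : ℂ) ^ ((i : ℤ) - 2 * (m : ℤ))) ≠ 0 := by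
      rw [hSre]
      rw [ne_eq, Complex.ofReal_eq_zero]
      refine ne_of_gt (Finset.sum_pos (fun m _ => ?_) (Finset.nonempty_range_iff.2 i.succ_ne_zero))
      exact zpow_pos hq _
    refine ⟨c * ((Real.sqrt q : ℝ) : ℂ) ^ (-(N : ℤ) - 1)
        * ∑ m ∈ Finset.range (i + 1), (q : ℂ) ^ ((i : ℤ) - 2 * (m : ℤ)),
      mul_ne_zero (mul_ne_zero hc (zpow_ne_zero _ (hrX hq))) hSne, fun s => ?_⟩
    rw [Function.iterate_succ_apply']
    exact Sq_applyX hq i c _ hP s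

lemma St_iterX {N : ℕ} {q : ℝ} (i : ℕ) (s : Fin N → Bool) :
    (StildeMinus N q)^[i] (allUp N) s = (Nat.factorial i : ℂ) * PfunX N q i s := by
  induction i generalizing s with
  | zero => simpa using baseX s
  | succ i ih =>
    rw [Function.iterate_succ_apply']
    exact St_applyX i _ (fun t => ih t) s

/-- Ground states of the q-deformed XXZ chain: for `0 ≤ i ≤ N` the `U_q(sl₂)` states
`(S_q⁻)^i |⇑⟩` are proportional (with a nonzero constant) to the Witten-conjugated states
`(S̃₁⁻)^i |⇑⟩`. -/
theorem qXXZ_ground_states_proportional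
    (N : ℕ) (hN : 1 ≤ N) (q : ℝ) (hq : 0 < q) (hq1 : q ≠ 1) (i : ℕ) (hi : i ≤ N) :
    ∃ c : ℂ, c ≠ 0 ∧ (SqMinus N q)^[i] (allUp N) = c • (StildeMinus N q)^[i] (allUp N) := by
  obtain ⟨c, hc, hSq⟩ := Sq_iterX (N := N) hq i
  have hfac : ((Nat.factorial i : ℂ)) ≠ 0 := Nat.cast_ne_zero.2 (Nat.factorial_ne_zero i)
  refine ⟨c / (Nat.factorial i : ℂ), div_ne_zero hc hfac, ?_⟩
  funext s
  rw [Pi.smul_apply, smul_eq_mul, hSq s, St_iterX i s]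
  field_simp
end

section
/- General Z_p-XY conjugated Hamiltonian: Fix an integer p ≥ 2 and let ω = exp(2πi/p). In Matrix (Fin p) (Fin p) ℂ (with indices in ZMod p) define the clock matrices τ = the diagonal matrix with entries τ_{k,k} = ω^k, and σ = the cyclic shift matrix with σ_{k,l} = 1 if l = k + 1 (mod p) and 0 otherwise (so σ maps the basis vector e_l to e_{l−1}). Let α : ZMod p → ℂ with α k ≠ 0 for all k, and let m be the diagonal matrix with entries m_{k,k} = α k. Define β_l = (1/p) ∑_{k} (α (k−1) / α k) ω^{−kl}, γ_l = (1/p) ∑_{k} |α (k−1) / α k|² ω^{−kl}, and B = ∑_{l} β_l • τ^l. Working with p²×p² matrices via the Kronecker product ⊗, set L = σ ⊗ 1 − 1 ⊗ σ and L̃ = (m ⊗ m) * L * (m ⊗ m)⁻¹. Then L̃ᴴ * L̃ = −( (Bᴴ * σᴴ) ⊗ (σ * B) + (σ * B) ⊗ (Bᴴ * σᴴ) ) + ∑_{l} γ_l • ( τ^l ⊗ 1 + 1 ⊗ τ^l ). -/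
open Matrix ZMod
open scoped Kronecker Matrix

/-! Fourier inversion on `ZMod p` identifies `B = ∑ β_l τ^l` with `diag(α_{k-1}/α_k)` and
`∑ γ_l τ^l` with `diag |α_{k-1}/α_k|²`. The shift `σ` is a permutation matrix, so conjugating it
by the diagonal `m` gives `m σ m⁻¹ = σ B`; hence `L̃ = S ⊗ 1 - 1 ⊗ S` with `S = σ B`, and expanding
`L̃ᴴ L̃` leaves the cross terms `-(Sᴴ ⊗ S + S ⊗ Sᴴ)` and the on-site terms
`Sᴴ S ⊗ 1 + 1 ⊗ Sᴴ S`, where `Sᴴ S = Bᴴ B = ∑ γ_l τ^l` because `σ` is unitary. -/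

section PermMatrix

variable {n R : Type*} [Fintype n] [DecidableEq n]

theorem Equiv.Perm.conjTranspose_permMatrix_mul_self [NonAssocSemiring R] [StarRing R]
    (π : Equiv.Perm n) : (π.permMatrix R)ᴴ * π.permMatrix R = 1 := by
  rw [conjTranspose_permMatrix, ← permMatrix_mul, mul_inv_cancel, permMatrix_one]

theorem Matrix.diagonal_mul_permMatrix_mul_diagonal [CommSemiring R] (π : Equiv.Perm n)
    (a b : n → R) :
    diagonal a * π.permMatrix R * diagonal b
      = π.permMatrix R * diagonal fun l => a (π.symm l) * b l := by
  ext k l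
  simp only [mul_diagonal, diagonal_mul, PEquiv.toMatrix_apply, Equiv.toPEquiv_apply,
    Option.mem_some_iff]
  split_ifs with h
  · rw [← h, Equiv.symm_apply_apply]; ring
  · simp

theorem Matrix.of_ite_eq_add_one_eq_permMatrix {G : Type*} [AddGroupWithOne G] [DecidableEq G]
    [Zero R] [One R] :
    (of fun k l : G => if l = k + 1 then (1 : R) else 0) = (Equiv.addRight 1).permMatrix R := by
  ext k l
  simp [PEquiv.toMatrix_apply, eq_comm]

theorem Matrix.inv_diagonal_of_ne_zero [Field R] {a : n → R} (ha : ∀ i, a i ≠ 0) :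
    (diagonal a)⁻¹ = diagonal a⁻¹ :=
  inv_eq_right_inv <| by
    rw [diagonal_mul_diagonal, ← diagonal_one]
    exact congrArg diagonal (funext fun i => mul_inv_cancel₀ (ha i))

theorem Matrix.conjTranspose_permMatrix_mul_diagonal_mul_self [CommSemiring R] [StarRing R]
    (π : Equiv.Perm n) (c : n → R) :
    (π.permMatrix R * diagonal c)ᴴ * (π.permMatrix R * diagonal c)
      = diagonal fun k => star (c k) * c k := by
  rw [conjTranspose_mul, diagonal_conjTranspose, mul_assoc, ← mul_assoc (π.permMatrix R)ᴴ,
    Equiv.Perm.conjTranspose_permMatrix_mul_self, one_mul, diagonal_mul_diagonal]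
  rfl

end PermMatrix

section Kronecker

variable {n R : Type*} [DecidableEq n]

theorem Matrix.kronecker_conj_sub_one_kronecker [Fintype n] [CommRing R] (M A : Matrix n n R)
    (hM : IsUnit M.det) :
    (M ⊗ₖ M) * (A ⊗ₖ 1 - 1 ⊗ₖ A) * (M ⊗ₖ M)⁻¹
      = (M * A * M⁻¹) ⊗ₖ 1 - 1 ⊗ₖ (M * A * M⁻¹) := by
  rw [inv_kronecker, mul_sub, sub_mul, ← mul_kronecker_mul, ← mul_kronecker_mul,
    ← mul_kronecker_mul, ← mul_kronecker_mul, mul_one, mul_nonsing_inv M hM]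

theorem Matrix.conjTranspose_mul_self_kronecker_sub [Fintype n] [CommRing R] [StarRing R]
    (S : Matrix n n R) :
    (S ⊗ₖ 1 - 1 ⊗ₖ S)ᴴ * (S ⊗ₖ 1 - 1 ⊗ₖ S)
      = -(Sᴴ ⊗ₖ S + S ⊗ₖ Sᴴ) + ((Sᴴ * S) ⊗ₖ 1 + 1 ⊗ₖ (Sᴴ * S)) := by
  rw [conjTranspose_sub, conjTranspose_kronecker, conjTranspose_kronecker, conjTranspose_one,
    sub_mul, mul_sub, mul_sub, ← mul_kronecker_mul, ← mul_kronecker_mul,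
    ← mul_kronecker_mul, ← mul_kronecker_mul]
  simp only [one_mul, mul_one]
  abel

theorem Matrix.sum_smul_kronecker_one_add_one_kronecker [CommSemiring R] {ι : Type*}
    (s : Finset ι) (c : ι → R) (A : ι → Matrix n n R) :
    ∑ i ∈ s, c i • (A i ⊗ₖ 1 + 1 ⊗ₖ A i)
      = (∑ i ∈ s, c i • A i) ⊗ₖ 1 + 1 ⊗ₖ (∑ i ∈ s, c i • A i) := by
  ext ⟨a, b⟩ ⟨a', b'⟩
  simp only [sum_apply, add_apply, smul_apply, kroneckerMap_apply, smul_eq_mul, mul_add,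
    Finset.sum_add_distrib, Finset.sum_mul, Finset.mul_sum]
  congr 1 <;> exact Finset.sum_congr rfl fun _ _ => by ring

end Kronecker

section Fourier

variable {N : ℕ} [NeZero N]

theorem ZMod.exp_two_pi_I_div_zpow (z : ℤ) :
    Complex.exp (2 * Real.pi * Complex.I / N) ^ z = stdAddChar (z : ZMod N) := by
  rw [stdAddChar_coe, ← Complex.exp_int_mul]
  ring_nf

theorem ZMod.exp_two_pi_I_div_pow_val_mul_val (k l : ZMod N) :
    Complex.exp (2 * Real.pi * Complex.I / N) ^ (k.val * l.val) = stdAddChar (k * l) := by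
  rw [← zpow_natCast, exp_two_pi_I_div_zpow]
  push_cast
  simp

theorem ZMod.sum_fourierCoeff_smul_diagonal_pow (f : ZMod N → ℂ) :
    ∑ l : ZMod N, ((1 / (N : ℂ)) * ∑ k : ZMod N,
        f k * Complex.exp (2 * Real.pi * Complex.I / N) ^ (-((k.val : ℤ) * (l.val : ℤ))))
        • (diagonal fun k : ZMod N => Complex.exp (2 * Real.pi * Complex.I / N) ^ k.val) ^ l.val
      = diagonal f := by
  have hpow (l : ZMod N) :
      (diagonal fun k : ZMod N => Complex.exp (2 * Real.pi * Complex.I / N) ^ k.val) ^ l.val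
        = diagonal fun k => stdAddChar (k * l) := by
    rw [diagonal_pow]
    congr 1 with k
    rw [Pi.pow_apply, ← pow_mul, exp_two_pi_I_div_pow_val_mul_val]
  have hcoeff (l : ZMod N) :
      (1 / (N : ℂ)) * ∑ k : ZMod N,
        f k * Complex.exp (2 * Real.pi * Complex.I / N) ^ (-((k.val : ℤ) * (l.val : ℤ)))
        = (N : ℂ)⁻¹ * 𝓕 f l := by
    simp only [dft_apply, exp_two_pi_I_div_zpow, one_div, smul_eq_mul, mul_comm (f _)]
    push_cast
    simp
  simp only [hpow, hcoeff, ← diagonal_smul]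
  refine (map_sum (diagonalAddMonoidHom (ZMod N) ℂ) _ _).symm.trans (congrArg diagonal ?_)
  ext k
  conv_rhs => rw [← (dft (E := ℂ)).symm_apply_apply f, invDFT_apply]
  simp [Finset.sum_apply, Finset.mul_sum, mul_comm, mul_left_comm]

end Fourier

theorem Zp_XY_conjugated_hamiltonian_general
    (p : ℕ) [NeZero p] (α : ZMod p → ℂ) (hα : ∀ k, α k ≠ 0) :
    let ω : ℂ := Complex.exp (2 * Real.pi * Complex.I / p)
    let τ : Matrix (ZMod p) (ZMod p) ℂ := Matrix.diagonal fun k => ω ^ (k.val)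
    let σ : Matrix (ZMod p) (ZMod p) ℂ := Matrix.of fun k l => if l = k + 1 then 1 else 0
    let m : Matrix (ZMod p) (ZMod p) ℂ := Matrix.diagonal α
    let β : ZMod p → ℂ := fun l =>
      (1 / (p : ℂ)) * ∑ k : ZMod p, (α (k - 1) / α k) * ω ^ (-((k.val : ℤ) * (l.val : ℤ)))
    let γ : ZMod p → ℂ := fun l =>
      (1 / (p : ℂ)) * ∑ k : ZMod p,
        ((‖α (k - 1) / α k‖ ^ 2 : ℝ) : ℂ) * ω ^ (-((k.val : ℤ) * (l.val : ℤ)))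
    let B : Matrix (ZMod p) (ZMod p) ℂ := ∑ l : ZMod p, β l • τ ^ (l.val)
    let L : Matrix (ZMod p × ZMod p) (ZMod p × ZMod p) ℂ := σ ⊗ₖ 1 - 1 ⊗ₖ σ
    let L' : Matrix (ZMod p × ZMod p) (ZMod p × ZMod p) ℂ := (m ⊗ₖ m) * L * (m ⊗ₖ m)⁻¹
    L'ᴴ * L' = -((Bᴴ * σᴴ) ⊗ₖ (σ * B) + (σ * B) ⊗ₖ (Bᴴ * σᴴ))
      + ∑ l : ZMod p, γ l • ((τ ^ l.val) ⊗ₖ (1 : Matrix (ZMod p) (ZMod p) ℂ) + (1 : Matrix (ZMod p) (ZMod p) ℂ) ⊗ₖ (τ ^ l.val)) := by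
  intro ω τ σ m β γ B L L'
  set c : ZMod p → ℂ := fun k => α (k - 1) / α k
  have hσ : σ = (Equiv.addRight 1).permMatrix ℂ := of_ite_eq_add_one_eq_permMatrix
  have hB : B = diagonal c := sum_fourierCoeff_smul_diagonal_pow c
  have hγ : ∑ l : ZMod p, γ l • τ ^ l.val = diagonal fun k => star (c k) * c k := by
    rw [sum_fourierCoeff_smul_diagonal_pow fun k => ((‖c k‖ ^ 2 : ℝ) : ℂ)]
    congr 1 with k
    rw [Complex.sq_norm, Complex.normSq_eq_conj_mul_self]
    rfl
  have hm : IsUnit m.det := by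
    simp [m, det_diagonal, Finset.prod_ne_zero_iff, hα]
  have hconj : m * σ * m⁻¹ = σ * B := by
    rw [hσ, hB, inv_diagonal_of_ne_zero hα, diagonal_mul_permMatrix_mul_diagonal]
    simp [c, div_eq_mul_inv, sub_eq_add_neg]
  have hnorm : (σ * B)ᴴ * (σ * B) = ∑ l : ZMod p, γ l • τ ^ l.val := by
    rw [hγ, hB, hσ, conjTranspose_permMatrix_mul_diagonal_mul_self]
  calc L'ᴴ * L' = ((σ * B) ⊗ₖ 1 - 1 ⊗ₖ (σ * B))ᴴ * ((σ * B) ⊗ₖ 1 - 1 ⊗ₖ (σ * B)) := by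
        simp only [L', L, kronecker_conj_sub_one_kronecker m σ hm, hconj]
    _ = _ := by
        rw [conjTranspose_mul_self_kronecker_sub, hnorm, ← conjTranspose_mul,
          sum_smul_kronecker_one_add_one_kronecker]

/-- The general frustration-free `ℤ_p`-generalisation of the XY chain: conjugating
`L = σ ⊗ 1 - 1 ⊗ σ` by `m ⊗ m` with `m = diag(α₀, …, α_{p-1})` yields
`L̃ᴴ L̃ = -((B†σ†) ⊗ (σB) + (σB) ⊗ (B†σ†)) + ∑_l γ_l (τ^l ⊗ 1 + 1 ⊗ τ^l)`,
with `B = ∑_l β_l τ^l`, `β_l = (1/p) ∑_k (α_{k-1}/α_k) ω^{-kl}` and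
`γ_l = (1/p) ∑_k |α_{k-1}/α_k|² ω^{-kl}`. -/
theorem Zp_XY_conjugated_hamiltonian
    (p : ℕ) [NeZero p] (hp : 2 ≤ p) (α : ZMod p → ℂ) (hα : ∀ k, α k ≠ 0) :
    let ω : ℂ := Complex.exp (2 * Real.pi * Complex.I / p)
    let τ : Matrix (ZMod p) (ZMod p) ℂ := Matrix.diagonal fun k => ω ^ (k.val)
    let σ : Matrix (ZMod p) (ZMod p) ℂ := Matrix.of fun k l => if l = k + 1 then 1 else 0
    let m : Matrix (ZMod p) (ZMod p) ℂ := Matrix.diagonal α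
    let β : ZMod p → ℂ := fun l =>
      (1 / (p : ℂ)) * ∑ k : ZMod p, (α (k - 1) / α k) * ω ^ (-((k.val : ℤ) * (l.val : ℤ)))
    let γ : ZMod p → ℂ := fun l =>
      (1 / (p : ℂ)) * ∑ k : ZMod p,
        ((‖α (k - 1) / α k‖ ^ 2 : ℝ) : ℂ) * ω ^ (-((k.val : ℤ) * (l.val : ℤ)))
    let B : Matrix (ZMod p) (ZMod p) ℂ := ∑ l : ZMod p, β l • τ ^ (l.val)
    let L : Matrix (ZMod p × ZMod p) (ZMod p × ZMod p) ℂ := σ ⊗ₖ 1 - 1 ⊗ₖ σ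
    let L' : Matrix (ZMod p × ZMod p) (ZMod p × ZMod p) ℂ := (m ⊗ₖ m) * L * (m ⊗ₖ m)⁻¹
    L'ᴴ * L' = -((Bᴴ * σᴴ) ⊗ₖ (σ * B) + (σ * B) ⊗ₖ (Bᴴ * σᴴ))
      + ∑ l : ZMod p, γ l • ((τ ^ l.val) ⊗ₖ (1 : Matrix (ZMod p) (ZMod p) ℂ) + (1 : Matrix (ZMod p) (ZMod p) ℂ) ⊗ₖ (τ ^ l.val)) :=
  Zp_XY_conjugated_hamiltonian_general p α hα
end

section
/- General Z_p-ANNNP conjugated Hamiltonian: Fix an integer p ≥ 2 and let ω = exp(2πi/p). In Matrix (Fin p) (Fin p) ℂ (with indices in ZMod p) define the clock matrices τ = the diagonal matrix with entries τ_{k,k} = ω^k, and σ = the cyclic shift matrix with σ_{k,l} = 1 if l = k + 1 (mod p) and 0 otherwise (so σ maps the basis vector e_l to e_{l−1}). Let α : ZMod p → ℝ with α k > 0 for all k, let m be the diagonal matrix with entries m_{k,k} = α k, and let k̂ be the diagonal matrix with entries k̂_{k,k} = α (k+1) / α k. Working with p²×p² matrices via the Kronecker product ⊗, set L = σ ⊗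 1 − 1 ⊗ σ and L̃ = (m ⊗ m) * L * (m ⊗ m)⁻¹. Then L̃ᴴ * (k̂ ⊗ k̂) * L̃ = −( σ ⊗ σᴴ + σᴴ ⊗ σ ) + (m⁻¹ * σᴴ * m * σ) ⊗ k̂ + k̂ ⊗ (m⁻¹ * σᴴ * m * σ). -/
open Matrix
open scoped Kronecker Matrix

lemma kronecker_conjTranspose' {n m : Type*} (A : Matrix n n ℂ) (B : Matrix m m ℂ) :
    (A ⊗ₖ B)ᴴ = Aᴴ ⊗ₖ Bᴴ := by
  ext ⟨i, j⟩ ⟨k, l⟩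
  simp [Matrix.conjTranspose_apply, star_mul']

/-- The general frustration-free `ℤ_p`-generalisation of the ANNNI (ANNNP) model: conjugating
`L = σ ⊗ 1 - 1 ⊗ σ` by `m ⊗ m` with `m = diag(α₀, …, α_{p-1})` (all `α_k > 0`) and using the
central term `k̂ ⊗ k̂` with `k̂ = diag(α_{k+1}/α_k)` yields
`L̃ᴴ (k̂ ⊗ k̂) L̃ = -(σ ⊗ σᴴ + σᴴ ⊗ σ) + (m⁻¹σᴴmσ) ⊗ k̂ + k̂ ⊗ (m⁻¹σᴴmσ)`. -/
theorem Zp_ANNNP_conjugated_hamiltonian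
    (p : ℕ) [NeZero p] (hp : 2 ≤ p) (α : ZMod p → ℝ) (hα : ∀ k, 0 < α k) :
    let σ : Matrix (ZMod p) (ZMod p) ℂ := Matrix.of fun k l => if l = k + 1 then 1 else 0
    let m : Matrix (ZMod p) (ZMod p) ℂ := Matrix.diagonal fun k => ((α k : ℝ) : ℂ)
    let khat : Matrix (ZMod p) (ZMod p) ℂ := Matrix.diagonal fun k => ((α (k + 1) / α k : ℝ) : ℂ)
    let L : Matrix (ZMod p × ZMod p) (ZMod p × ZMod p) ℂ := σ ⊗ₖ 1 - 1 ⊗ₖ σ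
    let L' : Matrix (ZMod p × ZMod p) (ZMod p × ZMod p) ℂ := (m ⊗ₖ m) * L * (m ⊗ₖ m)⁻¹
    L'ᴴ * (khat ⊗ₖ khat) * L' = -(σ ⊗ₖ σᴴ + σᴴ ⊗ₖ σ)
      + (m⁻¹ * σᴴ * m * σ) ⊗ₖ khat + khat ⊗ₖ (m⁻¹ * σᴴ * m * σ) := by
  intro σ m khat L L'
  have hα0 : ∀ k, ((α k : ℝ) : ℂ) ≠ 0 := fun k => by
    exact_mod_cast Complex.ofReal_ne_zero.mpr (hα k).ne'
  -- inverse of m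
  have hminv : m⁻¹ = Matrix.diagonal (fun k => ((α k : ℝ) : ℂ)⁻¹) := by
    apply Matrix.inv_eq_right_inv
    rw [show m = Matrix.diagonal (fun k => ((α k : ℝ) : ℂ)) from rfl,
      Matrix.diagonal_mul_diagonal,
      show (fun i => ((α i : ℝ) : ℂ) * ((α i : ℝ) : ℂ)⁻¹) = fun _ => (1 : ℂ) from
        funext fun k => mul_inv_cancel₀ (hα0 k), Matrix.diagonal_one]
  have hmu : m * m⁻¹ = 1 := by
    rw [hminv, show m = Matrix.diagonal (fun k => ((α k : ℝ) : ℂ)) from rfl,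
      Matrix.diagonal_mul_diagonal,
      show (fun i => ((α i : ℝ) : ℂ) * ((α i : ℝ) : ℂ)⁻¹) = fun _ => (1 : ℂ) from
        funext fun k => mul_inv_cancel₀ (hα0 k), Matrix.diagonal_one]
  set A : Matrix (ZMod p) (ZMod p) ℂ := m * σ * m⁻¹ with hA
  -- khat is hermitian
  have hkh : khatᴴ = khat := by
    ext i j
    simp only [khat, Matrix.conjTranspose_apply, Matrix.diagonal_apply]
    by_cases h : i = j
    · subst h; simp
    · simp [h, Ne.symm h]
  -- key simplification: khat * A = σ
  have h1 : khat * A = σ := by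
    ext i j
    rw [hA, hminv, ← Matrix.mul_assoc]
    rw [Matrix.mul_diagonal, ← Matrix.mul_assoc, Matrix.diagonal_mul_diagonal,
      Matrix.diagonal_mul]
    simp only [σ, khat, m, Matrix.of_apply]
    split_ifs with h
    · subst h
      have h1 := hα0 i
      have h2 := hα0 (i + 1)
      push_cast
      field_simp
    · simp
  have h2 : Aᴴ * khat = σᴴ := by
    rw [← hkh, ← Matrix.conjTranspose_mul, h1]
  -- σᴴ * m * σ is diagonal
  have hD : σᴴ * m * σ = Matrix.diagonal (fun k => ((α (k - 1) : ℝ) : ℂ)) := by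
    ext i j
    rw [Matrix.mul_apply]
    rw [Finset.sum_eq_single (j - 1)]
    · rw [Matrix.mul_diagonal]
      simp only [σ, Matrix.of_apply, Matrix.conjTranspose_apply, Matrix.diagonal_apply,
        sub_add_cancel]
      by_cases h : i = j
      · subst h; simp
      · simp [h]
    · intro b _ hb
      simp only [σ, Matrix.of_apply]
      rw [if_neg, mul_zero]
      intro hc
      apply hb
      rw [hc]; ring
    · intro h
      exact absurd (Finset.mem_univ _) h
  have hcomm : σᴴ * m * σ * m⁻¹ = m⁻¹ * (σᴴ * m * σ) := by
    rw [hD, hminv, Matrix.diagonal_mul_diagonal, Matrix.diagonal_mul_diagonal,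
      show (fun i => ((α (i - 1) : ℝ) : ℂ) * ((α i : ℝ) : ℂ)⁻¹)
          = fun i => ((α i : ℝ) : ℂ)⁻¹ * ((α (i - 1) : ℝ) : ℂ) from
        funext fun i => mul_comm _ _]
  have h3 : Aᴴ * khat * A = m⁻¹ * σᴴ * m * σ := by
    rw [h2, hA]
    simp only [← Matrix.mul_assoc]
    rw [hcomm]
    simp only [Matrix.mul_assoc]
  -- L' = A ⊗ 1 - 1 ⊗ A
  have hL' : L' = A ⊗ₖ 1 - 1 ⊗ₖ A := by
    have hk : (m ⊗ₖ m)⁻¹ = m⁻¹ ⊗ₖ m⁻¹ := by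
      apply Matrix.inv_eq_right_inv
      rw [← Matrix.mul_kronecker_mul, hmu, Matrix.one_kronecker_one]
    simp only [L', L, hk, Matrix.mul_sub, Matrix.sub_mul, ← Matrix.mul_kronecker_mul,
      Matrix.mul_one, Matrix.one_mul, hmu, hA]
  rw [hL']
  rw [Matrix.conjTranspose_sub, kronecker_conjTranspose', kronecker_conjTranspose',
    Matrix.conjTranspose_one]
  rw [Matrix.sub_mul, Matrix.sub_mul, Matrix.mul_sub, Matrix.mul_sub]
  have h4 : σᴴ * A = m⁻¹ * σᴴ * m * σ := by
    rw [show σᴴ * A = Aᴴ * khat * A from by rw [h2], h3]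
  simp only [← Matrix.mul_kronecker_mul, Matrix.one_mul, Matrix.mul_one, h1, h2, h4]
  abel
end

section
/- Frustration-free Z₄-ANNNP model: Let r > 0 be a real number. In Matrix (Fin 4) (Fin 4) ℂ define τ = the diagonal matrix with entries (1, i, −1, −i), σ = the cyclic shift matrix with σ_{k,l} = 1 if l = k + 1 (mod 4) and 0 otherwise (so σ maps e_l to e_{l−1}), m = the diagonal matrix with entries (1, r, r², r), and k̂ = the diagonal matrix with entries (r, r, r⁻¹, r⁻¹). Working with 16×16 matrices via the Kronecker product ⊗, set L = σ ⊗ 1 − 1 ⊗ σ and L̃ = (m ⊗ m) * L * (m ⊗ m)⁻¹. Then L̃ᴴ * (k̂ ⊗ k̂) * L̃ = −( σ ⊗ σᴴ + σᴴ ⊗ σ ) − (f/2) • ( τ ⊗ 1 + 1 ⊗ τ + τᴴ ⊗ 1 + 1 ⊗ τᴴ ) + U • ( τ ⊗ τ + τᴴ ⊗ τᴴ ) + ε • 1, where f = (r⁻² − r²)/2, U = (r − r⁻¹)²/4, and ε = (r + r⁻¹)²/2. -/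
open Matrix
open scoped Kronecker Matrix

private lemma kron_ct (X Y : Matrix (Fin 4) (Fin 4) ℂ) : (X ⊗ₖ Y)ᴴ = Xᴴ ⊗ₖ Yᴴ := by
  ext ⟨i, j⟩ ⟨k, l⟩
  simp [conjTranspose_apply, kroneckerMap_apply, mul_comm]

set_option maxHeartbeats 2000000 in
/-- The frustration-free `ℤ₄`-ANNNP model: conjugating `L = σ ⊗ 1 - 1 ⊗ σ` by `m ⊗ m` with
`m = diag(1, r, r², r)` and central term `k̂ ⊗ k̂` with `k̂ = diag(r, r, r⁻¹, r⁻¹)` yields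
`L̃ᴴ (k̂ ⊗ k̂) L̃ = -(σ⊗σᴴ + σᴴ⊗σ) - (f/2)(τ⊗1 + 1⊗τ + τᴴ⊗1 + 1⊗τᴴ) + U(τ⊗τ + τᴴ⊗τᴴ) + ε`,
with `f = (r⁻² - r²)/2`, `U = (r - r⁻¹)²/4` and `ε = (r + r⁻¹)²/2`. -/
theorem Z4_ANNNP_frustration_free (r : ℝ) (hr : 0 < r) :
    let τ : Matrix (Fin 4) (Fin 4) ℂ :=
      Matrix.diagonal ![1, Complex.I, -1, -Complex.I]
    let σ : Matrix (Fin 4) (Fin 4) ℂ := Matrix.of fun k l => if l = k + 1 then 1 else 0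
    let m : Matrix (Fin 4) (Fin 4) ℂ := Matrix.diagonal ![1, (r : ℂ), ((r ^ 2 : ℝ) : ℂ), (r : ℂ)]
    let khat : Matrix (Fin 4) (Fin 4) ℂ :=
      Matrix.diagonal ![(r : ℂ), (r : ℂ), ((r⁻¹ : ℝ) : ℂ), ((r⁻¹ : ℝ) : ℂ)]
    let L : Matrix (Fin 4 × Fin 4) (Fin 4 × Fin 4) ℂ := σ ⊗ₖ 1 - 1 ⊗ₖ σ
    let L' : Matrix (Fin 4 × Fin 4) (Fin 4 × Fin 4) ℂ := (m ⊗ₖ m) * L * (m ⊗ₖ m)⁻¹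
    let f : ℂ := ((r⁻¹ ^ 2 - r ^ 2) / 2 : ℝ)
    let U : ℂ := ((r - r⁻¹) ^ 2 / 4 : ℝ)
    let ε : ℂ := ((r + r⁻¹) ^ 2 / 2 : ℝ)
    L'ᴴ * (khat ⊗ₖ khat) * L' = -(σ ⊗ₖ σᴴ + σᴴ ⊗ₖ σ)
      - (f / 2) • (τ ⊗ₖ 1 + 1 ⊗ₖ τ + τᴴ ⊗ₖ 1 + 1 ⊗ₖ τᴴ)
      + U • (τ ⊗ₖ τ + τᴴ ⊗ₖ τᴴ) + ε • 1 := by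
  intro τ σ m khat L L' f U ε
  have hr0 : (r : ℂ) ≠ 0 := by
    exact_mod_cast hr.ne'
  set mi : Matrix (Fin 4) (Fin 4) ℂ :=
    Matrix.diagonal ![1, (r : ℂ)⁻¹, ((r : ℂ) ^ 2)⁻¹, (r : ℂ)⁻¹] with hmi
  have hmmi : m * mi = 1 := by
    ext i j
    fin_cases i <;> fin_cases j <;>
      simp [m, hmi, Matrix.mul_apply, Fin.sum_univ_four, Matrix.diagonal,
        Matrix.one_apply] <;>
      push_cast <;> field_simp
  have hinv : (m ⊗ₖ m)⁻¹ = mi ⊗ₖ mi :=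
    Matrix.inv_eq_right_inv (by
      rw [← Matrix.mul_kronecker_mul, hmmi, Matrix.one_kronecker_one])
  set A : Matrix (Fin 4) (Fin 4) ℂ := m * σ * mi with hA
  have hL' : L' = A ⊗ₖ 1 - 1 ⊗ₖ A := by
    show (m ⊗ₖ m) * (σ ⊗ₖ 1 - 1 ⊗ₖ σ) * (m ⊗ₖ m)⁻¹ = _
    rw [hinv]
    simp only [Matrix.mul_sub, Matrix.sub_mul, ← Matrix.mul_kronecker_mul,
      Matrix.mul_one, Matrix.one_mul, hmmi, ← hA]
  have hkA : khat * A = σ := by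
    ext i j
    fin_cases i <;> fin_cases j <;>
      simp [khat, hA, m, hmi, σ, Matrix.mul_apply, Fin.sum_univ_four, Matrix.diagonal] <;>
      push_cast <;> field_simp <;> ring
  have hkhat : khatᴴ = khat := by
    ext i j
    fin_cases i <;> fin_cases j <;>
      simp [khat, Matrix.conjTranspose_apply, Matrix.diagonal]
  have hAk : Aᴴ * khat = σᴴ := by
    have h := congrArg Matrix.conjTranspose hkA
    rwa [Matrix.conjTranspose_mul, hkhat] at h
  set D : Matrix (Fin 4) (Fin 4) ℂ :=
    Matrix.diagonal ![(r : ℂ), (r : ℂ)⁻¹, (r : ℂ)⁻¹, (r : ℂ)] with hDdef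
  have hsD : σᴴ * A = D := by
    ext i j
    fin_cases i <;> fin_cases j <;>
      simp [hA, σ, m, hmi, hDdef, Matrix.mul_apply, Fin.sum_univ_four,
        Matrix.conjTranspose_apply, Matrix.diagonal] <;>
      push_cast <;> field_simp <;> ring
  have hLHS : L'ᴴ * (khat ⊗ₖ khat) * L' =
      D ⊗ₖ khat + khat ⊗ₖ D - σᴴ ⊗ₖ σ - σ ⊗ₖ σᴴ := by
    rw [hL', Matrix.conjTranspose_sub, kron_ct, kron_ct, Matrix.conjTranspose_one]
    simp only [Matrix.sub_mul, Matrix.mul_sub, ← Matrix.mul_kronecker_mul,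
      Matrix.mul_one, Matrix.one_mul, hAk, hkA, hsD]
    abel
  have hf : f = (((r⁻¹ ^ 2 - r ^ 2) / 2 : ℝ) : ℂ) := rfl
  have hU : U = (((r - r⁻¹) ^ 2 / 4 : ℝ) : ℂ) := rfl
  have he : ε = (((r + r⁻¹) ^ 2 / 2 : ℝ) : ℂ) := rfl
  push_cast at hf hU he
  have key : D ⊗ₖ khat + khat ⊗ₖ D =
      U • (τ ⊗ₖ τ + τᴴ ⊗ₖ τᴴ) + ε • (1 : Matrix (Fin 4 × Fin 4) (Fin 4 × Fin 4) ℂ)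
        - (f / 2) • (τ ⊗ₖ 1 + 1 ⊗ₖ τ + τᴴ ⊗ₖ 1 + 1 ⊗ₖ τᴴ) := by
    rw [hf, hU, he]
    show Matrix.diagonal _ ⊗ₖ Matrix.diagonal _ + Matrix.diagonal _ ⊗ₖ Matrix.diagonal _ = _
    rw [show τ = Matrix.diagonal ![1, Complex.I, -1, -Complex.I] from rfl,
      Matrix.diagonal_conjTranspose,
      show (1 : Matrix (Fin 4) (Fin 4) ℂ) = Matrix.diagonal (fun _ => 1) from
        (Matrix.diagonal_one).symm,
      show (1 : Matrix (Fin 4 × Fin 4) (Fin 4 × Fin 4) ℂ) = Matrix.diagonal (fun _ => 1) from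
        (Matrix.diagonal_one).symm]
    simp only [Matrix.diagonal_kronecker_diagonal, Matrix.diagonal_add,
      ← Matrix.diagonal_smul]
    rw [Matrix.diagonal_sub, Matrix.diagonal_eq_diagonal_iff]
    rintro ⟨i, j⟩
    fin_cases i <;> fin_cases j <;> (simp [Complex.conj_I]; push_cast; ring)
  rw [hLHS, key]
  abel
end
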